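/- arXiv:1211.2896 — 10 statements merged into one kernel-verified Lean document; each statement's English description precedes it below -/
import Mathlib

section
/- Let R be a commutative domain, I an ideal of R, and M a finitely generated torsion-free R-module. Then the kernel of the natural multiplication map π : I ⊗_R M → IM (sending r ⊗ x to rx) equals the torsion submodule of I ⊗_R M. -/
open TensorProduct

/-- The kernel of the natural multiplication map `π : I ⊗[R] M → M` (with image `IM`),
sending `r ⊗ x` to `r • x`, equals the torsion submodule of `I ⊗[R] M`, for `R` a
commutative domain, `I` an ideal, and `M` a finitely generated torsion-free `R`-module. -/
theorem stmt0 {R M : Type*} [CommRing R] [IsDomain R] [AddCommGroup M] [Module R M]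
    [Module.Finite R M] [NoZeroSMulDivisors R M] (I : Ideal R) :
    LinearMap.ker (TensorProduct.lift ((LinearMap.lsmul R M).comp I.subtype)) =
      Submodule.torsion R (I ⊗[R] M) := by
  set π := TensorProduct.lift ((LinearMap.lsmul R M).comp I.subtype) with hπ
  have hπt : ∀ (x : I) (y : M), π (x ⊗ₜ y) = (x : R) • y := by
    intro x y
    simp [hπ]
  ext z
  simp only [LinearMap.mem_ker, Submodule.mem_torsion_iff]
  constructor
  · intro hz
    by_cases hI : I = ⊥
    · subst hI
      have hz0 : z = 0 := Subsingleton.elim _ _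
      exact ⟨⟨1, one_mem _⟩, by simp [hz0]⟩
    · obtain ⟨a, haI, ha⟩ := Submodule.exists_mem_ne_zero_of_ne_bot hI
      refine ⟨⟨a, mem_nonZeroDivisors_of_ne_zero ha⟩, ?_⟩
      have key : ∀ w : I ⊗[R] M, a • w = (⟨a, haI⟩ : I) ⊗ₜ[R] π w := by
        intro w
        induction w using TensorProduct.induction_on with
        | zero => simp
        | tmul x y =>
            rw [hπt, TensorProduct.smul_tmul', ← TensorProduct.smul_tmul]
            congr 1
            ext
            simp [mul_comm]
        | add u v hu hv =>
            rw [smul_add, map_add, TensorProduct.tmul_add, hu, hv]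
      show a • z = 0
      rw [key, hz, TensorProduct.tmul_zero]
  · rintro ⟨⟨r, hr⟩, hrz⟩
    have hr0 : r ≠ 0 := nonZeroDivisors.ne_zero hr
    have : r • π z = 0 := by
      rw [← map_smul]
      have : r • z = 0 := hrz
      rw [this, map_zero]
    exact (smul_eq_zero.mp this).resolve_left hr0
end

section
/- Let R be a commutative domain, M a finitely generated torsion-free R-module, and let I = (f, g) be a two-generated ideal of R. Then the torsion submodule of I ⊗_R M is isomorphic as an R-module to (fM ∩ gM)/((fR ∩ gR)M). -/
open TensorProduct Pointwise

section Aux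

variable {R M : Type*} [CommRing R] [AddCommGroup M] [Module R M] (f g : R)

private lemma hfmem : f ∈ Ideal.span ({f, g} : Set R) :=
  Ideal.subset_span (Set.mem_insert _ _)

private lemma hgmem : g ∈ Ideal.span ({f, g} : Set R) :=
  Ideal.subset_span (Set.mem_insert_of_mem _ rfl)

/-- The multiplication map `I ⊗ M → M`. -/
noncomputable def muMap : (Ideal.span ({f, g} : Set R)) ⊗[R] M →ₗ[R] M :=
  TensorProduct.lift ((LinearMap.lsmul R M).comp (Ideal.span ({f, g} : Set R)).subtype)

@[simp] private lemma muMap_tmul (i : Ideal.span ({f, g} : Set R)) (m : M) :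
    muMap f g (i ⊗ₜ[R] m) = (i : R) • m := rfl

/-- The map `M × M → I ⊗ M`, `(x, y) ↦ f ⊗ x + g ⊗ y`. -/
noncomputable def piMap : (M × M) →ₗ[R] (Ideal.span ({f, g} : Set R)) ⊗[R] M :=
  LinearMap.coprod (TensorProduct.mk R _ M ⟨f, hfmem f g⟩)
    (TensorProduct.mk R _ M ⟨g, hgmem f g⟩)

@[simp] private lemma piMap_apply (x y : M) :
    piMap f g (x, y) = (⟨f, hfmem f g⟩ : Ideal.span ({f, g} : Set R)) ⊗ₜ[R] x
      + (⟨g, hgmem f g⟩ : Ideal.span ({f, g} : Set R)) ⊗ₜ[R] y := rfl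

private lemma piMap_surjective : Function.Surjective (piMap f g (M := M)) := by
  intro z
  induction z using TensorProduct.induction_on with
  | zero => exact ⟨0, map_zero _⟩
  | tmul i m =>
    obtain ⟨a, b, hab⟩ := Ideal.mem_span_pair.mp i.2
    refine ⟨(a • m, b • m), ?_⟩
    rw [piMap_apply, tmul_smul, tmul_smul, smul_tmul', smul_tmul', ← add_tmul]
    congr 1
    exact Subtype.ext (by simpa [smul_eq_mul] using hab)
  | add z₁ z₂ h₁ h₂ =>
    obtain ⟨p₁, hp₁⟩ := h₁; obtain ⟨p₂, hp₂⟩ := h₂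
    exact ⟨p₁ + p₂, by rw [map_add, hp₁, hp₂]⟩

private lemma smul_eq_tmul_muMap (i : Ideal.span ({f, g} : Set R))
    (z : (Ideal.span ({f, g} : Set R)) ⊗[R] M) :
    (i : R) • z = i ⊗ₜ[R] muMap f g z := by
  induction z using TensorProduct.induction_on with
  | zero => simp
  | tmul j m =>
    rw [muMap_tmul, tmul_smul, smul_tmul', smul_tmul']
    congr 1
    exact Subtype.ext (mul_comm _ _)
  | add z₁ z₂ h₁ h₂ => rw [map_add, smul_add, h₁, h₂, tmul_add]

end Aux

section Aux2
variable {R M : Type*} [CommRing R] [AddCommGroup M] [Module R M] (f g : R)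

/-- `R × R → I`, `(a,b) ↦ af + bg`. -/
noncomputable def rhoMap : (R × R) →ₗ[R] (Ideal.span ({f, g} : Set R)) :=
  LinearMap.codRestrict _
    (LinearMap.coprod (LinearMap.toSpanSingleton R R f) (LinearMap.toSpanSingleton R R g))
    (fun p => by
      refine Ideal.add_mem _ ?_ ?_
      · exact Ideal.mul_mem_left _ _ (Ideal.subset_span (Set.mem_insert _ _))
      · exact Ideal.mul_mem_left _ _ (Ideal.subset_span (Set.mem_insert_of_mem _ rfl)))

@[simp] private lemma rhoMap_apply (a b : R) :
    ((rhoMap f g (a, b) : Ideal.span ({f, g} : Set R)) : R) = a * f + b * g := by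
  simp [rhoMap, LinearMap.toSpanSingleton, smul_eq_mul]

private lemma rhoMap_surjective : Function.Surjective (rhoMap f g) := by
  rintro ⟨i, hi⟩
  obtain ⟨a, b, hab⟩ := Ideal.mem_span_pair.mp hi
  exact ⟨(a, b), Subtype.ext (by simp [hab])⟩

/-- `(R × R) ⊗ M → M × M`, `(a,b) ⊗ m ↦ (a•m, b•m)`. -/
noncomputable def sigmaMap : (R × R) ⊗[R] M →ₗ[R] M × M :=
  TensorProduct.lift
    { toFun := fun p => ((p.1 • LinearMap.id).prod (p.2 • LinearMap.id) : M →ₗ[R] M × M)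
      map_add' := fun p q => by ext m <;> simp [add_smul]
      map_smul' := fun r p => by ext m <;> simp [mul_smul] }

@[simp] private lemma sigmaMap_tmul (a b : R) (m : M) :
    sigmaMap (M := M) ((a, b) ⊗ₜ[R] m) = (a • m, b • m) := rfl

end Aux2

section Aux3
variable {R M : Type*} [CommRing R] [AddCommGroup M] [Module R M] (f g : R)

private lemma range_claim (t : (LinearMap.ker (rhoMap f g)) ⊗[R] M) :
    f • (sigmaMap (LinearMap.rTensor M (LinearMap.ker (rhoMap f g)).subtype t)).1
      ∈ (Ideal.span {f} ⊓ Ideal.span {g}) • (⊤ : Submodule R M) := by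
  induction t using TensorProduct.induction_on with
  | zero => simp
  | tmul k m =>
    obtain ⟨⟨a, b⟩, hk⟩ := k
    have hab : a * f + b * g = 0 := by
      have := congrArg (Subtype.val) (LinearMap.mem_ker.mp hk)
      simpa using this
    have h1 : f * a ∈ Ideal.span ({f} : Set R) ⊓ Ideal.span {g} := by
      constructor
      · exact Ideal.mem_span_singleton'.mpr ⟨a, mul_comm a f⟩
      · refine Ideal.mem_span_singleton'.mpr ⟨-b, ?_⟩
        have : f * a = -(b * g) := by linear_combination hab
        rw [this]; ring
    have : f • (a • m) = (f * a) • m := smul_smul f a m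
    simp only [LinearMap.rTensor_tmul, Submodule.coe_subtype, sigmaMap_tmul]
    rw [this]
    exact Submodule.smul_mem_smul h1 trivial
  | add t₁ t₂ h₁ h₂ =>
    rw [map_add, map_add, Prod.fst_add, smul_add]
    exact Submodule.add_mem _ h₁ h₂

/-- Hard direction: if `π (x, y) = 0` then `f • x ∈ (fR ∩ gR) M`. -/
private lemma hard_dir (x y : M) (h : piMap f g (x, y) = 0) :
    f • x ∈ (Ideal.span {f} ⊓ Ideal.span {g}) • (⊤ : Submodule R M) := by
  set ρ := rhoMap f g
  have hexact : Function.Exact (LinearMap.rTensor M (LinearMap.ker ρ).subtype)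
      (LinearMap.rTensor M ρ) :=
    rTensor_exact M (LinearMap.exact_subtype_ker_map ρ) (rhoMap_surjective f g)
  set w : (R × R) ⊗[R] M := (1, 0) ⊗ₜ[R] x + (0, 1) ⊗ₜ[R] y with hw
  have hρw : LinearMap.rTensor M ρ w = piMap f g (x, y) := by
    rw [hw, map_add, LinearMap.rTensor_tmul, LinearMap.rTensor_tmul, piMap_apply]
    congr 1
    · congr 1; exact Subtype.ext (by simp [ρ])
    · congr 1; exact Subtype.ext (by simp [ρ])
  have hw0 : LinearMap.rTensor M ρ w = 0 := by rw [hρw, h]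
  obtain ⟨t, ht⟩ := (hexact w).mp hw0
  have hσ : sigmaMap w = (x, y) := by
    rw [hw, map_add, sigmaMap_tmul, sigmaMap_tmul]
    simp
  have := range_claim f g t
  rw [ht, hσ] at this
  exact this

end Aux3

section Aux4
variable {R M : Type*} [CommRing R] [IsDomain R] [AddCommGroup M] [Module R M]
  [NoZeroSMulDivisors R M] (f g : R)

private lemma S_lemma (v : M)
    (hv : v ∈ (Ideal.span {f} ⊓ Ideal.span {g}) • (⊤ : Submodule R M)) :
    ∃ x y : M, f • x = v ∧ g • y = v ∧
      ((⟨f, hfmem f g⟩ : Ideal.span ({f, g} : Set R)) ⊗ₜ[R] x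
        = (⟨g, hgmem f g⟩ : Ideal.span ({f, g} : Set R)) ⊗ₜ[R] y) := by
  refine Submodule.smul_induction_on hv ?_ ?_
  · rintro r ⟨hrf, hrg⟩ n -
    obtain ⟨a, ha⟩ := Ideal.mem_span_singleton'.mp hrf
    obtain ⟨b, hb⟩ := Ideal.mem_span_singleton'.mp hrg
    refine ⟨a • n, b • n, ?_, ?_, ?_⟩
    · rw [smul_smul, mul_comm, ha]
    · rw [smul_smul, mul_comm, hb]
    · rw [tmul_smul, tmul_smul, smul_tmul', smul_tmul']
      congr 1
      exact Subtype.ext (by simp [smul_eq_mul, ha, hb])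
  · rintro v₁ v₂ ⟨x₁, y₁, hx₁, hy₁, ht₁⟩ ⟨x₂, y₂, hx₂, hy₂, ht₂⟩
    exact ⟨x₁ + x₂, y₁ + y₂, by rw [smul_add, hx₁, hx₂], by rw [smul_add, hy₁, hy₂],
      by rw [tmul_add, tmul_add, ht₁, ht₂]⟩

/-- Easy direction: if `f•x + g•y = 0` and `f•x ∈ (fR ∩ gR)M` then `π (x,y) = 0`. -/
private lemma easy_dir (x y : M) (hzero : f • x + g • y = 0)
    (hJ : f • x ∈ (Ideal.span {f} ⊓ Ideal.span {g}) • (⊤ : Submodule R M)) :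
    piMap f g (x, y) = 0 := by
  rcases eq_or_ne f 0 with hf | hf
  · have hf' : (⟨f, hfmem f g⟩ : Ideal.span ({f, g} : Set R)) = 0 := Subtype.ext hf
    have hgy : g • y = 0 := by rw [hf, zero_smul, zero_add] at hzero; exact hzero
    rcases eq_or_ne g 0 with hg | hg
    · have hg' : (⟨g, hgmem f g⟩ : Ideal.span ({f, g} : Set R)) = 0 := Subtype.ext hg
      rw [piMap_apply, hf', hg', zero_tmul, zero_tmul, add_zero]
    · have hy : y = 0 := by
        rcases smul_eq_zero.mp hgy with h | h
        · exact absurd h hg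
        · exact h
      rw [piMap_apply, hf', hy, zero_tmul, tmul_zero, add_zero]
  · rcases eq_or_ne g 0 with hg | hg
    · have hg' : (⟨g, hgmem f g⟩ : Ideal.span ({f, g} : Set R)) = 0 := Subtype.ext hg
      have hfx : f • x = 0 := by rw [hg, zero_smul, add_zero] at hzero; exact hzero
      have hx : x = 0 := by
        rcases smul_eq_zero.mp hfx with h | h
        · exact absurd h hf
        · exact h
      rw [piMap_apply, hg', hx, zero_tmul, tmul_zero, add_zero]
    · obtain ⟨x₀, y₀, hx₀, hy₀, ht⟩ := S_lemma f g (f • x) hJ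
      have hxx : x = x₀ := smul_right_injective M hf (show f • x = f • x₀ by rw [hx₀])
      have hyy : y = -y₀ := smul_right_injective M hg
        (show g • y = g • -y₀ by rw [smul_neg, hy₀]; exact eq_neg_of_add_eq_zero_left (by rw [add_comm]; exact hzero))
      rw [piMap_apply, hxx, hyy, tmul_neg, ht, add_neg_cancel]

end Aux4

section Aux5
variable {R M : Type*} [CommRing R] [IsDomain R] [AddCommGroup M] [Module R M]
  [NoZeroSMulDivisors R M] (f g : R)

private lemma theta_apply (x y : M) :
    (muMap f g).comp (piMap f g) (x, y) = f • x + g • y := by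
  simp [piMap_apply, muMap_tmul]

private lemma torsion_eq_ker :
    Submodule.torsion R ((Ideal.span ({f, g} : Set R)) ⊗[R] M)
      = LinearMap.ker (muMap f g) := by
  ext z
  constructor
  · intro hz
    obtain ⟨a, ha⟩ := (Submodule.mem_torsion_iff _).mp hz
    have ha' : (a : R) • z = 0 := ha
    have h0 : (a : R) • muMap f g z = 0 := by
      rw [← map_smul, ha', map_zero]
    rcases smul_eq_zero.mp h0 with h | h
    · exact absurd h (nonZeroDivisors.ne_zero a.2)
    · exact LinearMap.mem_ker.mpr h
  · intro hz
    rw [LinearMap.mem_ker] at hz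
    rcases eq_or_ne f 0 with hf | hf
    · rcases eq_or_ne g 0 with hg | hg
      · -- f = g = 0 : every element of I ⊗ M is zero
        obtain ⟨⟨x, y⟩, rfl⟩ := piMap_surjective f g z
        have hf' : (⟨f, hfmem f g⟩ : Ideal.span ({f, g} : Set R)) = 0 := Subtype.ext hf
        have hg' : (⟨g, hgmem f g⟩ : Ideal.span ({f, g} : Set R)) = 0 := Subtype.ext hg
        rw [piMap_apply, hf', hg', zero_tmul, zero_tmul, add_zero]
        exact Submodule.zero_mem _
      · refine (Submodule.mem_torsion_iff _).mpr
          ⟨⟨g, mem_nonZeroDivisors_of_ne_zero hg⟩, ?_⟩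
        have := smul_eq_tmul_muMap f g (⟨g, hgmem f g⟩ : Ideal.span ({f, g} : Set R)) z
        simpa [hz] using this
    · refine (Submodule.mem_torsion_iff _).mpr
        ⟨⟨f, mem_nonZeroDivisors_of_ne_zero hf⟩, ?_⟩
      have := smul_eq_tmul_muMap f g (⟨f, hfmem f g⟩ : Ideal.span ({f, g} : Set R)) z
      simpa [hz] using this

end Aux5

private lemma mem_pt_smul {R M : Type*} [CommRing R] [AddCommGroup M] [Module R M]
    (a : R) (m : M) (h : m ∈ a • (⊤ : Submodule R M)) : ∃ x : M, a • x = m := by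
  have h' : m ∈ a • ((⊤ : Submodule R M) : Set M) := by
    rw [← Submodule.coe_pointwise_smul]; exact h
  obtain ⟨x, -, hx⟩ := Set.mem_smul_set.mp h'
  exact ⟨x, hx⟩

/-- For a commutative domain `R`, a finitely generated torsion-free `R`-module `M`, and a
two-generated ideal `I = (f, g)`, the torsion submodule of `I ⊗[R] M` is isomorphic to
`(fM ∩ gM) / ((fR ∩ gR)M)`. -/
theorem stmt1 {R M : Type*} [CommRing R] [IsDomain R] [AddCommGroup M] [Module R M]
    [Module.Finite R M] [NoZeroSMulDivisors R M] (f g : R)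
    (I : Ideal R) (hI : I = Ideal.span {f, g})
    (N : Submodule R M) (hN : N = (f • (⊤ : Submodule R M)) ⊓ (g • (⊤ : Submodule R M))) :
    Nonempty ((Submodule.torsion R (I ⊗[R] M)) ≃ₗ[R]
      (N ⧸ (Submodule.comap N.subtype
          ((Ideal.span {f} ⊓ Ideal.span {g}) • (⊤ : Submodule R M))))) := by
  subst hI hN
  set J : Submodule R M := (Ideal.span {f} ⊓ Ideal.span {g}) • (⊤ : Submodule R M) with hJ
  set N : Submodule R M := (f • (⊤ : Submodule R M)) ⊓ (g • (⊤ : Submodule R M)) with hNdef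
  set Q : Submodule R N := Submodule.comap N.subtype J with hQ
  set θ : (M × M) →ₗ[R] M := (muMap f g).comp (piMap f g) with hθ
  set P : Submodule R (M × M) := LinearMap.ker θ with hP
  -- key membership fact for P
  have hPmem : ∀ p : M × M, p ∈ P ↔ f • p.1 + g • p.2 = 0 := by
    intro p
    rw [hP, LinearMap.mem_ker, ← theta_apply f g p.1 p.2]
  set π' : P →ₗ[R] (Ideal.span ({f, g} : Set R)) ⊗[R] M :=
    (piMap f g).domRestrict P with hπ'
  -- the map α : P → N
  have hαmem : ∀ p : P, f • (p : M × M).1 ∈ N := by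
    rintro ⟨⟨x, y⟩, hp⟩
    have h0 : f • x + g • y = 0 := (hPmem _).mp hp
    constructor
    · exact Submodule.smul_mem_pointwise_smul _ _ _ trivial
    · have : f • x = g • (-y) := by
        rw [smul_neg]
        exact eq_neg_of_add_eq_zero_left h0
      rw [this]
      exact Submodule.smul_mem_pointwise_smul _ _ _ trivial
  set α : P →ₗ[R] N :=
    LinearMap.codRestrict N (((LinearMap.lsmul R M f).comp (LinearMap.fst R M M)).comp P.subtype)
      (fun p => hαmem p) with hα
  set β : P →ₗ[R] (N ⧸ Q) := Q.mkQ.comp α with hβ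
  -- torsion = range π'
  have hrange : LinearMap.range π' = Submodule.torsion R ((Ideal.span ({f, g} : Set R)) ⊗[R] M) := by
    rw [hπ', LinearMap.range_domRestrict, hP, hθ, LinearMap.ker_comp,
      Submodule.map_comap_eq, LinearMap.range_eq_top.mpr (piMap_surjective f g), top_inf_eq,
      torsion_eq_ker f g]
  -- kernels agree
  have hker : LinearMap.ker π' = LinearMap.ker β := by
    ext p
    have hval : (β p : N ⧸ Q) = Q.mkQ (α p) := rfl
    rw [LinearMap.mem_ker, LinearMap.mem_ker, hval, Submodule.mkQ_apply,
      Submodule.Quotient.mk_eq_zero]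
    have hαval : ((α p : N) : M) = f • (p : M × M).1 := rfl
    rw [hQ, Submodule.mem_comap, Submodule.subtype_apply, hαval]
    have hπ'val : π' p = piMap f g (p : M × M) := rfl
    constructor
    · intro h
      exact hard_dir f g (p : M × M).1 (p : M × M).2 (by rw [← hπ'val]; exact h)
    · intro h
      rw [hπ'val]
      exact easy_dir f g (p : M × M).1 (p : M × M).2 ((hPmem _).mp p.2) h
  -- β is surjective
  have hsurj : Function.Surjective β := by
    intro q
    obtain ⟨n, rfl⟩ := Submodule.mkQ_surjective Q q
    obtain ⟨hn1, hn2⟩ := n.2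
    obtain ⟨x, hx⟩ := mem_pt_smul f _ hn1
    obtain ⟨y, hy⟩ := mem_pt_smul g _ hn2
    have hpmem : (x, -y) ∈ P := by
      rw [hPmem]
      simp only [smul_neg]
      rw [hx, hy]
      exact add_neg_cancel _
    refine ⟨⟨(x, -y), hpmem⟩, ?_⟩
    have : α ⟨(x, -y), hpmem⟩ = n := Subtype.ext (by rw [hα]; exact hx)
    rw [hβ, LinearMap.comp_apply, this]
  exact ⟨((LinearEquiv.ofEq _ _ hrange.symm).trans
      (π'.quotKerEquivRange).symm).trans
      ((Submodule.quotEquivOfEq _ _ hker).trans (β.quotKerEquivOfSurjective hsurj))⟩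
end

section
/- Let R be a commutative domain, M a finitely generated torsion-free R-module, and let P, Q be finitely generated ideals with P + Q = I. Then there is an exact sequence T(P ⊗_R M) ⊕ T(Q ⊗_R M) → T(I ⊗_R M) → ((PM) ∩ (QM))/((P ∩ Q)M) → 0, where the first map sends (a, b) to the sum of the images of a and b in T(I ⊗_R M). -/
open TensorProduct

section Aux

variable {R M : Type*} [CommRing R] [AddCommGroup M] [Module R M]

/-- The multiplication map `J ⊗ M → M`. -/
noncomputable def muJ (J : Ideal R) : ((J : Submodule R R) ⊗[R] M) →ₗ[R] M :=
  TensorProduct.lift ((LinearMap.lsmul R M).comp (Submodule.subtype (J : Submodule R R)))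

@[simp] lemma muJ_tmul (J : Ideal R) (a : (J : Submodule R R)) (m : M) :
    muJ J (a ⊗ₜ m) = (a : R) • m := rfl

lemma muJ_comp_incl {J J' : Ideal R} (h : J ≤ J') :
    (muJ (M := M) J').comp (TensorProduct.map (Submodule.inclusion h) LinearMap.id) =
      muJ (M := M) J := by
  ext a m
  simp [Submodule.inclusion]

lemma range_muJ (J : Ideal R) :
    LinearMap.range (muJ (M := M) J) = J • (⊤ : Submodule R M) := by
  apply le_antisymm
  · rintro _ ⟨x, rfl⟩
    induction x with
    | zero => simp
    | tmul a m => exact Submodule.smul_mem_smul a.2 trivial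
    | add x y hx hy => rw [map_add]; exact Submodule.add_mem _ hx hy
  · intro x hx
    refine Submodule.smul_induction_on hx (fun r hr m _ => ⟨(⟨r, hr⟩ : J) ⊗ₜ m, rfl⟩) ?_
    rintro x y ⟨u, rfl⟩ ⟨v, rfl⟩
    exact ⟨u + v, map_add _ _ _⟩

lemma ker_muJ_le_torsion [IsDomain R] (J : Ideal R) :
    LinearMap.ker (muJ (M := M) J) ≤ Submodule.torsion R ((J : Submodule R R) ⊗[R] M) := by
  rcases eq_or_ne J ⊥ with rfl | hJ
  · intro x _
    have hx : x = 0 := by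
      have : ∀ y : ((⊥ : Ideal R) : Submodule R R) ⊗[R] M, y = 0 := by
        intro y
        induction y with
        | zero => rfl
        | tmul a m =>
          have : a = 0 := Subtype.ext ((Submodule.mem_bot R).mp a.2)
          rw [this, zero_tmul]
        | add x y hx hy => rw [hx, hy, add_zero]
      exact this x
    rw [hx]; exact Submodule.zero_mem _
  · obtain ⟨s, hsJ, hs⟩ := Submodule.exists_mem_ne_zero_of_ne_bot hJ
    intro x hx
    have key : ∀ y : ((J : Submodule R R) ⊗[R] M),
        s • y = (⟨s, hsJ⟩ : J) ⊗ₜ (muJ J y) := by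
      intro y
      induction y with
      | zero => simp
      | tmul a m =>
        rw [muJ_tmul, smul_tmul', ← smul_tmul]
        congr 1
        exact Subtype.ext (by simp [mul_comm])
      | add y z hy hz => rw [smul_add, map_add, tmul_add, hy, hz]
    have : s • x = 0 := by
      rw [key x, LinearMap.mem_ker.mp hx, tmul_zero]
    exact ⟨⟨s, mem_nonZeroDivisors_of_ne_zero hs⟩, this⟩

lemma torsion_le_ker_muJ [IsDomain R] [NoZeroSMulDivisors R M] (J : Ideal R) :
    Submodule.torsion R ((J : Submodule R R) ⊗[R] M) ≤ LinearMap.ker (muJ (M := M) J) := by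
  rintro x ⟨⟨r, hr⟩, hrx⟩
  have h1 : r • muJ (M := M) J x = 0 := by
    rw [← map_smul]
    simp only [Submonoid.smul_def] at hrx
    rw [hrx, map_zero]
  have hr0 : r ≠ 0 := nonZeroDivisors.ne_zero hr
  rcases smul_eq_zero.mp h1 with h | h
  · exact absurd h hr0
  · exact h

end Aux


lemma exists_descend {R A B C : Type*} [CommRing R] [AddCommGroup A] [Module R A]
    [AddCommGroup B] [Module R B] [AddCommGroup C] [Module R C]
    (p : A →ₗ[R] B) (q : A →ₗ[R] C) (hp : Function.Surjective p)
    (h : LinearMap.ker p ≤ LinearMap.ker q) :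
    ∃ d : B →ₗ[R] C, ∀ a, d (p a) = q a := by
  set E := LinearMap.quotKerEquivOfSurjective p hp with hE
  refine ⟨(Submodule.liftQ (LinearMap.ker p) q h).comp E.symm.toLinearMap, fun a => ?_⟩
  have hEmk : E (Submodule.Quotient.mk a) = p a := rfl
  have h1 : E.symm (p a) = Submodule.Quotient.mk a :=
    (LinearEquiv.symm_apply_eq E).mpr hEmk.symm
  rw [LinearMap.comp_apply, LinearEquiv.coe_toLinearMap, h1, Submodule.liftQ_apply]

set_option maxHeartbeats 1000000 in
/-- For a commutative domain `R`, a finitely generated torsion-free `R`-module `M`, and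
finitely generated ideals `P, Q` with `P + Q = I`, there is an exact sequence
`T(P ⊗ M) ⊕ T(Q ⊗ M) → T(I ⊗ M) → ((PM) ∩ (QM))/((P ∩ Q)M) → 0`, where the first map is
induced by the inclusions `P, Q ⊆ I`. Exactness is expressed by the existence of a
surjective map `δ` from `T(I ⊗ M)` onto the quotient whose kernel is the image of the
first map. -/
theorem stmt2 {R M : Type*} [CommRing R] [IsDomain R] [AddCommGroup M] [Module R M]
    [Module.Finite R M] [NoZeroSMulDivisors R M] (P Q I : Ideal R)
    (hP : P.FG) (hQ : Q.FG) (hPQ : P ⊔ Q = I)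
    (hPI : P ≤ I) (hQI : Q ≤ I)
    (N : Submodule R M) (hN : N = (P • (⊤ : Submodule R M)) ⊓ (Q • (⊤ : Submodule R M))) :
    ∃ δ : (Submodule.torsion R (I ⊗[R] M)) →ₗ[R]
        (N ⧸ (Submodule.comap N.subtype ((P ⊓ Q) • (⊤ : Submodule R M)))),
      Function.Surjective δ ∧
      LinearMap.ker δ =
        Submodule.comap (Submodule.torsion R (I ⊗[R] M)).subtype
          (LinearMap.range (LinearMap.coprod
            ((TensorProduct.map (Submodule.inclusion hPI) LinearMap.id).comp
              (Submodule.torsion R ((P : Submodule R R) ⊗[R] M)).subtype)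
            ((TensorProduct.map (Submodule.inclusion hQI) LinearMap.id).comp
              (Submodule.torsion R ((Q : Submodule R R) ⊗[R] M)).subtype))) := by
  classical
  -- basic maps
  set ιP : ((P : Submodule R R) ⊗[R] M) →ₗ[R] (I ⊗[R] M) :=
    TensorProduct.map (Submodule.inclusion hPI) LinearMap.id with hιP
  set ιQ : ((Q : Submodule R R) ⊗[R] M) →ₗ[R] (I ⊗[R] M) :=
    TensorProduct.map (Submodule.inclusion hQI) LinearMap.id with hιQ
  set jP : (((P ⊓ Q : Ideal R) : Submodule R R) ⊗[R] M) →ₗ[R] ((P : Submodule R R) ⊗[R] M) :=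
    TensorProduct.map (Submodule.inclusion inf_le_left) LinearMap.id with hjP
  set jQ : (((P ⊓ Q : Ideal R) : Submodule R R) ⊗[R] M) →ₗ[R] ((Q : Submodule R R) ⊗[R] M) :=
    TensorProduct.map (Submodule.inclusion inf_le_right) LinearMap.id with hjQ
  set π : (((P : Submodule R R) ⊗[R] M) × ((Q : Submodule R R) ⊗[R] M)) →ₗ[R] (I ⊗[R] M) :=
    LinearMap.coprod ιP ιQ with hπdef
  -- untensored exact sequence P⊓Q → P × Q → I
  set e : ↥((P ⊓ Q : Ideal R) : Submodule R R) →ₗ[R]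
      (↥(P : Submodule R R) × ↥(Q : Submodule R R)) :=
    (Submodule.inclusion inf_le_left).prod (-(Submodule.inclusion inf_le_right)) with hedef
  set g : (↥(P : Submodule R R) × ↥(Q : Submodule R R)) →ₗ[R] ↥(I : Submodule R R) :=
    LinearMap.coprod (Submodule.inclusion hPI) (Submodule.inclusion hQI) with hgdef
  have hg : Function.Surjective g := by
    rintro ⟨i, hi⟩
    have : i ∈ P ⊔ Q := hPQ ▸ hi
    obtain ⟨p, hp, q, hq, rfl⟩ := Submodule.mem_sup.mp this
    exact ⟨(⟨p, hp⟩, ⟨q, hq⟩), rfl⟩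
  have hexact : Function.Exact e g := by
    intro pq
    constructor
    · intro h
      have h' : (pq.1 : R) + (pq.2 : R) = 0 := congrArg Subtype.val h
      have hm : (pq.1 : R) ∈ P ⊓ Q := by
        refine ⟨pq.1.2, ?_⟩
        have : (pq.1 : R) = -(pq.2 : R) := eq_neg_of_add_eq_zero_left h'
        rw [this]; exact neg_mem pq.2.2
      refine ⟨⟨(pq.1 : R), hm⟩, ?_⟩
      have h2 : (pq.2 : R) = -(pq.1 : R) := eq_neg_of_add_eq_zero_right h'
      ext
      · rfl
      · simp [hedef, h2]
    · rintro ⟨c, rfl⟩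
      simp [hgdef, hedef, Submodule.inclusion]
      ext
      simp [Submodule.inclusion]
  -- tensored exactness
  have texact : Function.Exact (LinearMap.rTensor M e) (LinearMap.rTensor M g) :=
    rTensor_exact M hexact hg
  have tsurj : Function.Surjective (LinearMap.rTensor M g) :=
    LinearMap.rTensor_surjective M hg
  set φ := TensorProduct.prodLeft R R (P : Submodule R R) (Q : Submodule R R) M with hφdef
  have hπφ : ∀ z, π (φ z) = LinearMap.rTensor M g z := by
    intro z
    have : π.comp (φ : ((↥(P : Submodule R R) × ↥(Q : Submodule R R)) ⊗[R] M) →ₗ[R] _)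
        = LinearMap.rTensor M g := by
      apply TensorProduct.ext'
      rintro ⟨p, q⟩ m
      simp [hπdef, hιP, hιQ, hgdef, hφdef, TensorProduct.prodLeft_tmul, add_tmul]
    exact congrFun (congrArg (fun f => f.toFun) this) z
  have hkφ : ∀ c, φ (LinearMap.rTensor M e c) = (jP c, -(jQ c)) := by
    intro c
    have : (φ : ((↥(P : Submodule R R) × ↥(Q : Submodule R R)) ⊗[R] M) →ₗ[R] _).comp
        (LinearMap.rTensor M e) = jP.prod (-jQ) := by
      apply TensorProduct.ext'
      intro a m
      simp [hedef, hjP, hjQ, hφdef, TensorProduct.prodLeft_tmul, neg_tmul]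
    have := congrFun (congrArg (fun f => f.toFun) this) c
    simpa using this
  have surjπ : Function.Surjective π := by
    intro y
    obtain ⟨z, hz⟩ := tsurj y
    exact ⟨φ z, by rw [hπφ z, hz]⟩
  have kerπ : ∀ ab, π ab = 0 → ∃ c, jP c = ab.1 ∧ -(jQ c) = ab.2 := by
    intro ab hab
    have h1 : LinearMap.rTensor M g (φ.symm ab) = 0 := by
      rw [← hπφ (φ.symm ab)]
      simp [hab]
    obtain ⟨c, hc⟩ := (texact _).mp h1
    have : φ (LinearMap.rTensor M e c) = ab := by rw [hc]; simp
    rw [hkφ c] at this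
    exact ⟨c, congrArg Prod.fst this, congrArg Prod.snd this⟩
  -- muJ compatibilities
  have hμP : ∀ a, muJ I (ιP a) = muJ P a := fun a =>
    congrFun (congrArg (fun f => f.toFun) (muJ_comp_incl (M := M) hPI)) a
  have hμQ : ∀ b, muJ I (ιQ b) = muJ Q b := fun b =>
    congrFun (congrArg (fun f => f.toFun) (muJ_comp_incl (M := M) hQI)) b
  have hμjP : ∀ c, muJ P (jP c) = muJ (P ⊓ Q) c := fun c =>
    congrFun (congrArg (fun f => f.toFun) (muJ_comp_incl (M := M) (inf_le_left (b := Q)))) c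
  have hμjQ : ∀ c, muJ Q (jQ c) = muJ (P ⊓ Q) c := fun c =>
    congrFun (congrArg (fun f => f.toFun) (muJ_comp_incl (M := M) (inf_le_right (a := P)))) c
  have hμπ : ∀ ab, muJ I (π ab) = muJ P ab.1 + muJ Q ab.2 := by
    intro ab
    simp only [hπdef, LinearMap.coprod_apply, map_add, hμP, hμQ]
  have hιjPQ : ∀ c, ιP (jP c) = ιQ (jQ c) := by
    intro c
    have : ιP.comp jP = ιQ.comp jQ := by
      apply TensorProduct.ext'
      intro a m
      simp only [hιP, hιQ, hjP, hjQ, TensorProduct.map_tmul, LinearMap.id_coe, id_eq]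
      exact congrArg (· ⊗ₜ[R] m) (Subtype.ext rfl)
    exact congrFun (congrArg (fun f => f.toFun) this) c
  -- torsion = kernel of muJ I
  have Ttop : LinearMap.ker (muJ (M := M) I) = Submodule.torsion R (I ⊗[R] M) :=
    le_antisymm (ker_muJ_le_torsion I) (torsion_le_ker_muJ I)
  -- the submodule Z
  set Z := LinearMap.ker ((muJ (M := M) I).comp π) with hZdef
  set D := Submodule.comap N.subtype ((P ⊓ Q) • (⊤ : Submodule R M)) with hDdef
  -- lambda map into N
  have hmemN : ∀ z : Z, muJ P z.val.1 ∈ N := by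
    rintro ⟨⟨a, b⟩, hz⟩
    have h0 : muJ P a + muJ Q b = 0 := by
      have := LinearMap.mem_ker.mp hz
      rwa [LinearMap.comp_apply, hμπ (a, b)] at this
    rw [hN]
    constructor
    · rw [← range_muJ]; exact ⟨a, rfl⟩
    · have : muJ P a = -(muJ Q b) := eq_neg_of_add_eq_zero_left h0
      rw [this, ← range_muJ]
      exact ⟨-b, by simp⟩
  set lam : Z →ₗ[R] N :=
    LinearMap.codRestrict N ((muJ P).comp ((LinearMap.fst R _ _).comp Z.subtype)) hmemN
      with hlamdef
  have hlamval : ∀ z : Z, ((lam z : N) : M) = muJ P z.val.1 := fun z => rfl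
  set qmap : Z →ₗ[R] (N ⧸ D) := D.mkQ.comp lam with hqdef
  -- pmap : Z → torsion
  have hmemT : ∀ z : Z, π z.val ∈ Submodule.torsion R (I ⊗[R] M) := by
    intro z
    rw [← Ttop]
    exact LinearMap.mem_ker.mp z.2
  set pmap : Z →ₗ[R] (Submodule.torsion R (I ⊗[R] M)) :=
    LinearMap.codRestrict _ (π.comp Z.subtype) hmemT with hpdef
  have hpval : ∀ z : Z, ((pmap z : _) : I ⊗[R] M) = π z.val := fun z => rfl
  have psurj : Function.Surjective pmap := by
    rintro ⟨x, hx⟩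
    rw [← Ttop] at hx
    obtain ⟨ab, hab⟩ := surjπ x
    have hz : ab ∈ Z := by
      rw [hZdef, LinearMap.mem_ker, LinearMap.comp_apply, hab]
      exact hx
    exact ⟨⟨ab, hz⟩, Subtype.ext hab⟩
  have hker : LinearMap.ker pmap ≤ LinearMap.ker qmap := by
    intro z hz
    have hz0 : π z.val = 0 := by
      have := congrArg (Subtype.val) (LinearMap.mem_ker.mp hz)
      simpa [hpval] using this
    obtain ⟨c, hc1, hc2⟩ := kerπ _ hz0
    have : muJ P z.val.1 ∈ (P ⊓ Q) • (⊤ : Submodule R M) := by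
      rw [← hc1, hμjP c, ← range_muJ]
      exact ⟨c, rfl⟩
    rw [LinearMap.mem_ker, hqdef, LinearMap.comp_apply, Submodule.mkQ_apply,
      Submodule.Quotient.mk_eq_zero]
    exact this
  -- build delta
  obtain ⟨δ, hδp⟩ := exists_descend (A := Z) (B := Submodule.torsion R (I ⊗[R] M)) (C := N ⧸ D) pmap qmap psurj hker
  refine ⟨δ, ?_, ?_⟩
  · -- surjectivity
    intro y
    obtain ⟨n, rfl⟩ := Submodule.mkQ_surjective D y
    have hn : (n : M) ∈ P • (⊤ : Submodule R M) ∧ (n : M) ∈ Q • (⊤ : Submodule R M) := by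
      have h2 := n.2
      simp only [hN, Submodule.mem_inf] at h2
      exact h2
    obtain ⟨a, ha⟩ : ∃ a, muJ P a = (n : M) := by
      have := hn.1; rw [← range_muJ] at this; exact this
    obtain ⟨b, hb⟩ : ∃ b, muJ Q b = (n : M) := by
      have := hn.2; rw [← range_muJ] at this; exact this
    have hz : ((a, -b) : _ × _) ∈ Z := by
      rw [hZdef, LinearMap.mem_ker, LinearMap.comp_apply, hμπ (a, -b)]
      simp [ha, hb]
    refine ⟨pmap ⟨(a, -b), hz⟩, ?_⟩
    rw [hδp]
    rw [hqdef, LinearMap.comp_apply, Submodule.mkQ_apply]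
    congr 1
    exact Subtype.ext (by rw [hlamval]; exact ha)
  · -- kernel
    apply le_antisymm
    · intro x hx
      obtain ⟨z, rfl⟩ := psurj x
      have hq0 : qmap z = 0 := by rw [← hδp z]; exact LinearMap.mem_ker.mp hx
      have hmem : muJ P z.val.1 ∈ (P ⊓ Q) • (⊤ : Submodule R M) := by
        have := hq0
        rw [hqdef, LinearMap.comp_apply, Submodule.mkQ_apply,
          Submodule.Quotient.mk_eq_zero] at this
        exact this
      rw [← range_muJ] at hmem
      obtain ⟨c, hc⟩ := hmem
      set a' := z.val.1 - jP c with ha'def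
      set b' := z.val.2 + jQ c with hb'def
      have h0 : muJ P z.val.1 + muJ Q z.val.2 = 0 := by
        have := LinearMap.mem_ker.mp z.2
        rwa [LinearMap.comp_apply, hμπ] at this
      have ha' : a' ∈ Submodule.torsion R ((P : Submodule R R) ⊗[R] M) := by
        apply ker_muJ_le_torsion
        rw [LinearMap.mem_ker, ha'def, map_sub, hμjP, hc, sub_self]
      have hb' : b' ∈ Submodule.torsion R ((Q : Submodule R R) ⊗[R] M) := by
        apply ker_muJ_le_torsion
        rw [LinearMap.mem_ker, hb'def, map_add, hμjQ, hc, add_comm]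
        exact h0
      refine ⟨(⟨a', ha'⟩, ⟨b', hb'⟩), ?_⟩
      show ιP a' + ιQ b' = ((pmap z : _) : I ⊗[R] M)
      rw [hpval, ha'def, hb'def, map_sub, map_add, hιjPQ c]
      have : π z.val = ιP z.val.1 + ιQ z.val.2 := rfl
      rw [this]
      abel
    · rintro x ⟨⟨a, b⟩, hab⟩
      have hab' : ιP a.val + ιQ b.val = (x : I ⊗[R] M) := hab
      have hμa : muJ P a.val = 0 := torsion_le_ker_muJ P a.2
      have hμb : muJ Q b.val = 0 := torsion_le_ker_muJ Q b.2
      have hz : (a.val, b.val) ∈ Z := by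
        rw [hZdef, LinearMap.mem_ker, LinearMap.comp_apply, hμπ]
        simp [hμa, hμb]
      have hpx : pmap ⟨(a.val, b.val), hz⟩ = x := Subtype.ext hab'
      rw [LinearMap.mem_ker, ← hpx, hδp]
      rw [hqdef, LinearMap.comp_apply, Submodule.mkQ_apply, Submodule.Quotient.mk_eq_zero]
      show lam _ ∈ D
      have : lam ⟨(a.val, b.val), hz⟩ = 0 := Subtype.ext (by rw [hlamval]; exact hμa)
      rw [this]
      exact Submodule.zero_mem _
end

section
/- Let R be a commutative domain with field of fractions K, and let M be a finitely generated rank n R-submodule of K^n. Then the map sending v ∈ M^{-1} to the R-linear map w ↦ v · w is an R-module isomorphism from M^{-1} onto Hom_R(M, R). -/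
/-- The inverse `X⁻¹` of a submodule `X ⊆ K^n`, as an `R`-submodule of `K^n`: all vectors
`v` with `v · w ∈ R` for every `w ∈ X`. -/
def dualSubmodule (R : Type*) {K : Type*} [CommRing R] [Field K] [Algebra R K] {n : ℕ}
    (X : Submodule R (Fin n → K)) : Submodule R (Fin n → K) where
  carrier := {v | ∀ w ∈ X, ∃ r : R, algebraMap R K r = dotProduct v w}
  zero_mem' := fun w _ => ⟨0, by simp⟩
  add_mem' := by
    intro v v' hv hv' w hw
    obtain ⟨r, hr⟩ := hv w hw
    obtain ⟨r', hr'⟩ := hv' w hw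
    exact ⟨r + r', by simp [add_dotProduct, hr, hr']⟩
  smul_mem' := by
    intro c v hv w hw
    obtain ⟨r, hr⟩ := hv w hw
    refine ⟨c * r, ?_⟩
    rw [map_mul, hr, smul_dotProduct, Algebra.smul_def]

section Aux

variable {R K : Type*} [CommRing R] [IsDomain R] [Field K] [Algebra R K]
    [IsFractionRing R K] {n : ℕ} (M : Submodule R (Fin n → K))

/-- The `R`-element witnessing `v · w ∈ R`. -/
noncomputable def dsPick (v : dualSubmodule R M) (w : M) : R :=
  (v.2 (w : Fin n → K) w.2).choose

lemma dsPick_spec (v : dualSubmodule R M) (w : M) :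
    algebraMap R K (dsPick M v w) = dotProduct (v : Fin n → K) (w : Fin n → K) :=
  (v.2 (w : Fin n → K) w.2).choose_spec

/-- The linear map `w ↦ v · w : M →ₗ[R] R`. -/
noncomputable def dsHom (v : dualSubmodule R M) : M →ₗ[R] R where
  toFun := dsPick M v
  map_add' := fun a b => by
    apply IsFractionRing.injective R K
    simp only [map_add, dsPick_spec, Submodule.coe_add, dotProduct_add]
  map_smul' := fun r a => by
    apply IsFractionRing.injective R K
    simp only [RingHom.id_apply, smul_eq_mul]
    rw [map_mul, dsPick_spec, dsPick_spec, SetLike.val_smul,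
      dotProduct_smul]
    exact Algebra.smul_def _ _

/-- `dsHom` as a linear map. -/
noncomputable def dsΦ : (dualSubmodule R M) →ₗ[R] (M →ₗ[R] R) where
  toFun := dsHom M
  map_add' := fun v v' => by
    ext w
    apply IsFractionRing.injective R K
    simp only [dsHom, LinearMap.coe_mk, AddHom.coe_mk, LinearMap.add_apply, map_add,
      dsPick_spec, Submodule.coe_add, add_dotProduct]
  map_smul' := fun r v => by
    ext w
    apply IsFractionRing.injective R K
    simp only [dsHom, LinearMap.coe_mk, AddHom.coe_mk, RingHom.id_apply,
      LinearMap.smul_apply, smul_eq_mul, map_mul, dsPick_spec, SetLike.val_smul,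
      smul_dotProduct]
    exact Algebra.smul_def _ _

end Aux

/-- For a commutative domain `R` with field of fractions `K` and a finitely generated
rank-`n` submodule `M ⊆ K^n`, the map sending `v ∈ M⁻¹` to the linear map `w ↦ v · w`
is an `R`-module isomorphism `M⁻¹ ≅ Hom_R(M, R)`. -/
theorem stmt4 {R K : Type*} [CommRing R] [IsDomain R] [Field K] [Algebra R K]
    [IsFractionRing R K] {n : ℕ} (M : Submodule R (Fin n → K))
    (hM : M.FG) (hMrk : Submodule.span K (M : Set (Fin n → K)) = ⊤) :
    ∃ e : (dualSubmodule R M) ≃ₗ[R] (M →ₗ[R] R),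
      ∀ (v : dualSubmodule R M) (w : M),
        algebraMap R K ((e v) w) = dotProduct (v : Fin n → K) (w : Fin n → K) := by
  have hinj : Function.Injective (dsΦ M) := by
    intro v v' h
    have h0 : ∀ w : M, dotProduct ((v : Fin n → K) - (v' : Fin n → K)) (w : Fin n → K) = 0 := by
      intro w
      have := congrArg (fun f => algebraMap R K (f w)) (congrArg (fun φ => φ.toFun) h)
      simp only [dsΦ, dsHom, LinearMap.coe_mk, AddHom.coe_mk] at this
      rw [dsPick_spec, dsPick_spec] at this
      rw [sub_dotProduct, this, sub_self]
    -- the K-linear functional x ↦ (v - v') · x vanishes on M, hence everywhere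
    set u : Fin n → K := (v : Fin n → K) - (v' : Fin n → K) with hu
    let L : (Fin n → K) →ₗ[K] K :=
      { toFun := fun x => dotProduct u x
        map_add' := fun a b => dotProduct_add u a b
        map_smul' := fun c a => by simp [dotProduct_smul] }
    have hML : M ≤ (LinearMap.ker L).restrictScalars R := by
      intro w hw
      exact h0 ⟨w, hw⟩
    have hall : ∀ x, L x = 0 := by
      intro x
      have : Submodule.span K (M : Set (Fin n → K)) ≤ LinearMap.ker L :=
        Submodule.span_le.mpr hML
      rw [hMrk] at this
      exact this Submodule.mem_top
    have : u = 0 := by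
      funext i
      have := hall (Pi.single i 1)
      simpa [L, dotProduct_single] using this
    have : (v : Fin n → K) = (v' : Fin n → K) := sub_eq_zero.mp this
    exact Subtype.ext this
  have hsurj : Function.Surjective (dsΦ M) := by
    intro f
    obtain ⟨s, hsub, hspan, hli⟩ := exists_linearIndependent K (M : Set (Fin n → K))
    rw [hMrk] at hspan
    let b : Module.Basis s K (Fin n → K) := Module.Basis.mk hli (by rw [Subtype.range_coe, hspan])
    let g : (Fin n → K) →ₗ[K] K :=
      b.constr K fun i => algebraMap R K (f ⟨(i : Fin n → K), hsub i.2⟩)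
    have hgb : ∀ i : s, g (i : Fin n → K) = algebraMap R K (f ⟨(i : Fin n → K), hsub i.2⟩) := by
      intro i
      have : g (b i) = algebraMap R K (f ⟨(i : Fin n → K), hsub i.2⟩) :=
        Module.Basis.constr_basis b K _ i
      rwa [Module.Basis.mk_apply] at this
    have key : ∀ w : M, g (w : Fin n → K) = algebraMap R K (f w) := by
      intro w
      set c : s →₀ K := b.repr (w : Fin n → K) with hc
      obtain ⟨d, hd⟩ := IsLocalization.exist_integer_multiples (nonZeroDivisors R)
        c.support (fun i => c i)
      have hd0 : algebraMap R K (d : R) ≠ 0 := fun h =>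
        nonZeroDivisors.coe_ne_zero d (IsFractionRing.injective R K (by rw [h, map_zero]))
      have hsum : (w : Fin n → K) = ∑ i ∈ c.support, c i • (i : Fin n → K) := by
        conv_lhs => rw [← b.linearCombination_repr (w : Fin n → K)]
        rw [Finsupp.linearCombination_apply, Finsupp.sum, ← hc]
        exact Finset.sum_congr rfl fun i _ => by rw [Module.Basis.mk_apply]
      have hr' : ∀ i ∈ c.support, ∃ ri : R, algebraMap R K ri = (d : R) • c i :=
        fun i hi => hd i hi
      choose! r hr using hr'
      have hdw : ((d : R) • w : M)
          = ∑ i ∈ c.support, r i • (⟨(i : Fin n → K), hsub i.2⟩ : M) := by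
        apply Subtype.ext
        have hco : ((∑ i ∈ c.support, r i • (⟨(i : Fin n → K), hsub i.2⟩ : M) : M) : Fin n → K)
            = ∑ i ∈ c.support, r i • (i : Fin n → K) := by
          simp
        rw [hco, SetLike.val_smul]
        conv_lhs => rw [hsum]
        rw [Finset.smul_sum]
        refine Finset.sum_congr rfl fun i hi => ?_
        rw [← algebraMap_smul K (r i) (i : Fin n → K), hr i hi, smul_assoc]
      have hfd : (d : R) * f w = ∑ i ∈ c.support, r i * f ⟨(i : Fin n → K), hsub i.2⟩ := by
        have hfd0 := congrArg f hdw
        rw [map_smul, map_sum] at hfd0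
        simp only [map_smul, smul_eq_mul] at hfd0
        exact hfd0
      have hgw : g (w : Fin n → K)
          = ∑ i ∈ c.support, c i * algebraMap R K (f ⟨(i : Fin n → K), hsub i.2⟩) := by
        conv_lhs => rw [hsum]
        rw [map_sum]
        exact Finset.sum_congr rfl fun i _ => by rw [map_smul, hgb i, smul_eq_mul]
      apply mul_left_cancel₀ hd0
      rw [hgw, Finset.mul_sum, ← map_mul, hfd, map_sum]
      refine Finset.sum_congr rfl fun i hi => ?_
      rw [map_mul, hr i hi, Algebra.smul_def, mul_assoc]
    -- candidate vector
    let v : Fin n → K := fun j => g (Pi.single j 1)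
    have hgv : ∀ x : Fin n → K, g x = dotProduct v x := by
      intro x
      let L : (Fin n → K) →ₗ[K] K :=
        { toFun := fun x => dotProduct v x
          map_add' := fun a b => dotProduct_add v a b
          map_smul' := fun c a => by simp [dotProduct_smul] }
      have : g = L := by
        apply (Pi.basisFun K (Fin n)).ext
        intro j
        simp [L, Pi.basisFun_apply, dotProduct_single, v]
      rw [this]; rfl
    have hv : v ∈ dualSubmodule R M := by
      intro w hw
      exact ⟨f ⟨w, hw⟩, by rw [← hgv, key ⟨w, hw⟩]⟩
    refine ⟨⟨v, hv⟩, ?_⟩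
    ext w
    apply IsFractionRing.injective R K
    show algebraMap R K (dsPick M ⟨v, hv⟩ w) = _
    rw [dsPick_spec, ← hgv, key]
  refine ⟨LinearEquiv.ofBijective (dsΦ M) ⟨hinj, hsurj⟩, fun v w => ?_⟩
  exact dsPick_spec M v w
end

section
/- Let R be a commutative domain with field of fractions K, let I = (f, g) be a two-generated nonzero fractional ideal, and let M be a finitely generated rank n submodule of K^n. Then the torsion submodule of I ⊗_R Hom_R(M, R) is isomorphic to (IM)^{-1}/(I^{-1}M^{-1}). In particular, T(I ⊗_R I^*) ≅ (I^2)^{-1}/(I^{-1})^2 for a two-generated fractional ideal I. -/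
set_option linter.unusedSectionVars false
set_option synthInstance.maxHeartbeats 1000000
set_option maxHeartbeats 1000000

open TensorProduct

/-- The inverse `I⁻¹ = (R :_K I)` of a fractional ideal `I`, as an `R`-submodule of `K`. -/
def fracDual (R : Type*) {K : Type*} [CommRing R] [Field K] [Algebra R K]
    (I : Submodule R K) : Submodule R K where
  carrier := {x | ∀ y ∈ I, ∃ r : R, algebraMap R K r = x * y}
  zero_mem' := fun y _ => ⟨0, by simp⟩
  add_mem' := by
    intro x x' hx hx' y hy
    obtain ⟨r, hr⟩ := hx y hy
    obtain ⟨r', hr'⟩ := hx' y hy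
    exact ⟨r + r', by simp [add_mul, hr, hr']⟩
  smul_mem' := by
    intro c x hx y hy
    obtain ⟨r, hr⟩ := hx y hy
    refine ⟨c * r, ?_⟩
    rw [map_mul, hr, Algebra.smul_def, mul_assoc]

/-- The product `IM ⊆ K^n` of a fractional ideal `I ⊆ K` and a submodule `M ⊆ K^n`:
the submodule generated by products `x • m` with `x ∈ I`, `m ∈ M`. -/
def prodSubmodule {R K : Type*} [CommRing R] [Field K] [Algebra R K] {n : ℕ}
    (I : Submodule R K) (M : Submodule R (Fin n → K)) : Submodule R (Fin n → K) :=
  Submodule.span R {v | ∃ x ∈ I, ∃ m ∈ M, v = x • m}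
open TensorProduct

open TensorProduct

section Aux

variable {R K : Type*} [CommRing R] [IsDomain R] [Field K] [Algebra R K] [IsFractionRing R K]
variable {V : Type*} [AddCommGroup V] [Module K V] [Module R V] [IsScalarTower R K V]

/-- `(N : I)` for `I = (f,g)`: elements `w` with `f•w, g•w ∈ N`. -/
def stabSub (f g : K) (N : Submodule R V) : Submodule R V where
  carrier := {w | f • w ∈ N ∧ g • w ∈ N}
  zero_mem' := by simp
  add_mem' := by
    intro a b ha hb
    exact ⟨by rw [smul_add]; exact N.add_mem ha.1 hb.1,
           by rw [smul_add]; exact N.add_mem ha.2 hb.2⟩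
  smul_mem' := by
    intro c x hx
    exact ⟨by rw [smul_comm]; exact N.smul_mem c hx.1,
           by rw [smul_comm]; exact N.smul_mem c hx.2⟩

/-- abstract product `I'·N`. -/
def sProd (I' : Submodule R K) (N : Submodule R V) : Submodule R V :=
  Submodule.span R {v | ∃ x ∈ I', ∃ m ∈ N, v = x • m}

lemma mem_stabSub {f g : K} {N : Submodule R V} {w : V} :
    w ∈ stabSub f g N ↔ f • w ∈ N ∧ g • w ∈ N := Iff.rfl

/-- torsion is preserved by linear equivs -/
lemma torsion_map_eq {A B : Type*} [AddCommMonoid A] [AddCommMonoid B] [Module R A] [Module R B]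
    (e : A ≃ₗ[R] B) : (Submodule.torsion R A).map (e : A →ₗ[R] B) = Submodule.torsion R B := by
  ext b
  simp only [Submodule.mem_map]
  constructor
  · rintro ⟨a, ha, rfl⟩
    obtain ⟨c, hc⟩ := (Submodule.mem_torsion_iff a).mp ha
    refine (Submodule.mem_torsion_iff _).mpr ⟨c, ?_⟩
    rw [Submonoid.smul_def] at hc ⊢
    rw [← map_smul, hc, map_zero]
  · intro hb
    obtain ⟨c, hc⟩ := (Submodule.mem_torsion_iff b).mp hb
    refine ⟨e.symm b, (Submodule.mem_torsion_iff _).mpr ⟨c, ?_⟩, by simp⟩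
    rw [Submonoid.smul_def] at hc
    rw [Submonoid.smul_def]
    apply e.injective
    rw [map_smul, e.apply_symm_apply, hc, map_zero]

noncomputable def torsionEquiv {A B : Type*} [AddCommMonoid A] [AddCommMonoid B] [Module R A]
    [Module R B] (e : A ≃ₗ[R] B) :
    Submodule.torsion R A ≃ₗ[R] Submodule.torsion R B :=
  (e.submoduleMap (Submodule.torsion R A)).trans (LinearEquiv.ofEq _ _ (torsion_map_eq e))

noncomputable def quotCongr {V : Type*} [AddCommGroup V] [Module R V]
    {A A' P P' : Submodule R V} (h : A = A') (hP : P = P') :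
    (A ⧸ Submodule.comap A.subtype P) ≃ₗ[R] (A' ⧸ Submodule.comap A'.subtype P') := by
  subst h; subst hP; exact LinearEquiv.refl _ _

end Aux
/-- the additive group structure on a submodule of a field. -/
abbrev subAddCommGroupK {R K : Type*} [CommRing R] [Field K] [Algebra R K]
    (I : Submodule R K) : AddCommGroup I := Submodule.addCommGroup I

noncomputable section Core
attribute [local instance] subAddCommGroupK

variable {R K : Type*} [CommRing R] [IsDomain R] [Field K] [Algebra R K] [IsFractionRing R K]
variable {V : Type*} [AddCommGroup V] [Module K V] [Module R V] [IsScalarTower R K V]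

/-- the bilinear multiplication map `I × N → V`. -/
def coreB (I : Submodule R K) (N : Submodule R V) : I →ₗ[R] N →ₗ[R] V :=
  LinearMap.mk₂ R (fun x v => (x : K) • (v : V))
    (by intro x y v; rw [Submodule.coe_add, add_smul])
    (by intro c x v; rw [SetLike.val_smul, smul_assoc])
    (by intro x v w; rw [Submodule.coe_add, smul_add])
    (by intro c x v; rw [SetLike.val_smul, smul_comm])

/-- evaluation `I ⊗ N → V`. -/
def coreΦ (I : Submodule R K) (N : Submodule R V) : I ⊗[R] N →ₗ[R] V :=
  TensorProduct.lift (coreB I N)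

@[simp] lemma coreΦ_tmul (I : Submodule R K) (N : Submodule R V) (x : I) (v : N) :
    coreΦ I N (x ⊗ₜ v) = (x : K) • (v : V) := rfl

/-- multiplication by `f` from `stabSub f g N` to `N`. -/
def coreMu (f g : K) (N : Submodule R V) : stabSub f g N →ₗ[R] N where
  toFun w := ⟨f • (w : V), w.2.1⟩
  map_add' := by
    intro a b; apply Subtype.ext
    show f • ((a : V) + (b : V)) = f • (a : V) + f • (b : V)
    rw [smul_add]
  map_smul' := by
    intro c a; apply Subtype.ext
    show f • (c • (a : V)) = c • (f • (a : V))
    rw [smul_comm]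

@[simp] lemma coreMu_apply (f g : K) (N : Submodule R V) (w : stabSub f g N) :
    (coreMu f g N w : V) = f • (w : V) := rfl

/-- swap of coordinates: multiplication by `g`. -/
def coreMu' (f g : K) (N : Submodule R V) : stabSub f g N →ₗ[R] N where
  toFun w := ⟨g • (w : V), w.2.2⟩
  map_add' := by
    intro a b; apply Subtype.ext
    show g • ((a : V) + (b : V)) = g • (a : V) + g • (b : V)
    rw [smul_add]
  map_smul' := by
    intro c a; apply Subtype.ext
    show g • (c • (a : V)) = c • (g • (a : V))
    rw [smul_comm]

@[simp] lemma coreMu'_apply (f g : K) (N : Submodule R V) (w : stabSub f g N) :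
    (coreMu' f g N w : V) = g • (w : V) := rfl

/-- the map `w ↦ g ⊗ fw - f ⊗ gw`. -/
def corePsi (f g : K) (I : Submodule R K) (N : Submodule R V) (hfI : f ∈ I) (hgI : g ∈ I) :
    stabSub f g N →ₗ[R] I ⊗[R] N :=
  ((TensorProduct.mk R I N ⟨g, hgI⟩).comp (coreMu f g N)) -
    ((TensorProduct.mk R I N ⟨f, hfI⟩).comp (coreMu' f g N))

lemma corePsi_apply (f g : K) (I : Submodule R K) (N : Submodule R V) (hfI : f ∈ I)
    (hgI : g ∈ I) (w : stabSub f g N) :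
    corePsi f g I N hfI hgI w =
      (⟨g, hgI⟩ : I) ⊗ₜ[R] (⟨f • (w : V), w.2.1⟩ : N) -
      (⟨f, hfI⟩ : I) ⊗ₜ[R] (⟨g • (w : V), w.2.2⟩ : N) := rfl

/-- the presentation map `R² → I`. -/
def corePi (f g : K) (I : Submodule R K) (hfI : f ∈ I) (hgI : g ∈ I) :
    (Fin 2 → R) →ₗ[R] I where
  toFun c := c 0 • (⟨f, hfI⟩ : I) + c 1 • (⟨g, hgI⟩ : I)
  map_add' := by
    intro a b
    simp only [Pi.add_apply, add_smul]
    abel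
  map_smul' := by
    intro c a
    simp only [Pi.smul_apply, smul_eq_mul, mul_smul, RingHom.id_apply, smul_add]

/-- coordinate extraction `R² ⊗ N → N`. -/
def coreEps (j : Fin 2) (N : Submodule R V) : (Fin 2 → R) ⊗[R] N →ₗ[R] N :=
  TensorProduct.lift (LinearMap.mk₂ R (fun (c : Fin 2 → R) (v : N) => c j • v)
    (by intro x y v; rw [Pi.add_apply, add_smul])
    (by intro c x v; rw [Pi.smul_apply, smul_eq_mul, mul_smul])
    (by intro x v w; rw [smul_add])
    (by intro c x v; rw [smul_comm]))

@[simp] lemma coreEps_tmul (j : Fin 2) (N : Submodule R V) (c : Fin 2 → R) (v : N) :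
    coreEps j N (c ⊗ₜ v) = c j • v := rfl

end Core
section CoreMain
attribute [local instance] subAddCommGroupK

variable {R K : Type*} [CommRing R] [IsDomain R] [Field K] [Algebra R K] [IsFractionRing R K]
variable {V : Type*} [AddCommGroup V] [Module K V] [Module R V] [IsScalarTower R K V]

theorem core_torsion (f g : K) (hf : f ≠ 0) (hg : g ≠ 0) (I : Submodule R K)
    (hI : I = Submodule.span R {f, g}) (N : Submodule R V) :
    Nonempty ((Submodule.torsion R (I ⊗[R] N)) ≃ₗ[R]
      (stabSub f g N ⧸
        Submodule.comap (stabSub f g N).subtype (sProd (fracDual R I) N))) := by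
  have hfI : f ∈ I := by rw [hI]; exact Submodule.subset_span (by simp)
  have hgI : g ∈ I := by rw [hI]; exact Submodule.subset_span (by simp)
  set f' : I := ⟨f, hfI⟩ with hf'
  set g' : I := ⟨g, hgI⟩ with hg'
  set Ψ := corePsi f g I N hfI hgI with hΨ
  set Φ := coreΦ I N with hΦdef
  -- every element of I ⊗ N is f ⊗ a + g ⊗ b
  have hAB : ∀ t : I ⊗[R] N, ∃ a b : N, t = f' ⊗ₜ[R] a + g' ⊗ₜ[R] b := by
    intro t
    induction t using TensorProduct.induction_on with
    | zero => exact ⟨0, 0, by simp⟩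
    | tmul x v =>
      obtain ⟨c, d, hcd⟩ := Submodule.mem_span_pair.mp (by rw [← hI]; exact x.2)
      refine ⟨c • v, d • v, ?_⟩
      rw [tmul_smul, tmul_smul, smul_tmul', smul_tmul']
      rw [← add_tmul]
      congr 1
      apply Subtype.ext
      exact hcd.symm
    | add x y hx hy =>
      obtain ⟨a, b, rfl⟩ := hx
      obtain ⟨a', b', rfl⟩ := hy
      refine ⟨a + a', b + b', ?_⟩
      rw [tmul_add, tmul_add]
      abel
  -- a common "denominator" relation between f and g
  obtain ⟨⟨p, q⟩, hpq⟩ := IsLocalization.surj (M := nonZeroDivisors R) (f * g⁻¹)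
  have hq0 : algebraMap R K q ≠ 0 := by
    simpa using (IsFractionRing.to_map_ne_zero_iff_ne_zero (K := K)).mpr
      (nonZeroDivisors.ne_zero q.2)
  have hfq : f * algebraMap R K q = algebraMap R K p * g := by
    field_simp at hpq
    rw [mul_comm] at hpq
    linear_combination hpq
  have hp0 : p ≠ 0 := by
    intro h
    rw [h, map_zero, zero_mul, mul_eq_zero] at hfq
    tauto
  -- the image of Ψ is torsion
  have hΨtor : ∀ w, p • Ψ w = 0 := by
    intro w
    have h1 : p • g' = (q : R) • f' := by
      apply Subtype.ext
      show p • g = (q : R) • f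
      rw [Algebra.smul_def, Algebra.smul_def, ← hfq, mul_comm]
    have h2 : ((q : R) • (⟨f • (w : V), w.2.1⟩ : N)) = p • (⟨g • (w : V), w.2.2⟩ : N) := by
      apply Subtype.ext
      show (q : R) • (f • (w : V)) = p • (g • (w : V))
      rw [← algebraMap_smul K (q : R) (f • (w : V)), ← algebraMap_smul K p (g • (w : V)),
        smul_smul, smul_smul, mul_comm (algebraMap R K (q : R)) f, hfq]
    rw [hΨ, corePsi_apply, smul_sub, smul_tmul', h1, ← smul_tmul', ← tmul_smul, ← tmul_smul,
      h2, sub_self]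
  have hrange_le : LinearMap.range Ψ ≤ Submodule.torsion R (I ⊗[R] N) := by
    rintro t ⟨w, rfl⟩
    exact (Submodule.mem_torsion_iff _).mpr
      ⟨⟨p, mem_nonZeroDivisors_of_ne_zero hp0⟩, hΨtor w⟩
  -- torsion is contained in the kernel of Φ
  have htor_le : Submodule.torsion R (I ⊗[R] N) ≤ LinearMap.ker Φ := by
    intro t ht
    obtain ⟨c, hc⟩ := (Submodule.mem_torsion_iff t).mp ht
    rw [Submonoid.smul_def] at hc
    rw [LinearMap.mem_ker]
    have h1 : algebraMap R K (c : R) • Φ t = 0 := by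
      rw [algebraMap_smul, ← map_smul, hc, map_zero]
    have hc0 : algebraMap R K (c : R) ≠ 0 := by
      simpa using (IsFractionRing.to_map_ne_zero_iff_ne_zero (K := K)).mpr
        (nonZeroDivisors.ne_zero c.2)
    have h2 := congrArg (fun x => (algebraMap R K (c : R))⁻¹ • x) h1
    simp only [smul_zero] at h2
    rwa [smul_smul, inv_mul_cancel₀ hc0, one_smul] at h2
  -- the kernel of Φ is contained in the range of Ψ
  have hker_le : LinearMap.ker Φ ≤ LinearMap.range Ψ := by
    intro t ht
    rw [LinearMap.mem_ker] at ht
    obtain ⟨a, b, rfl⟩ := hAB t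
    rw [map_add] at ht
    rw [hΦdef] at ht
    rw [coreΦ_tmul, coreΦ_tmul] at ht
    set w : V := f⁻¹ • (b : V) with hw
    have hfw : f • w = (b : V) := by rw [hw, smul_inv_smul₀ hf]
    have hgw : g • w = -(a : V) := by
      rw [hw, smul_comm, eq_comm, neg_eq_iff_add_eq_zero]
      have := congrArg (fun x => f⁻¹ • x) ht
      simpa [hf', hg', smul_add, smul_smul, inv_mul_cancel₀ hf, add_comm] using this
    have hwmem : w ∈ stabSub f g N :=
      ⟨by rw [hfw]; exact b.2, by rw [hgw]; exact N.neg_mem a.2⟩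
    refine ⟨⟨w, hwmem⟩, ?_⟩
    rw [hΨ, corePsi_apply]
    have e1 : (⟨f • w, hwmem.1⟩ : N) = b := Subtype.ext hfw
    have e2 : (⟨g • w, hwmem.2⟩ : N) = -a := Subtype.ext (by simp [hgw])
    rw [e1, e2, tmul_neg, sub_neg_eq_add, add_comm]
  have htorsion_eq : Submodule.torsion R (I ⊗[R] N) = LinearMap.range Ψ :=
    le_antisymm (fun t ht => hker_le (htor_le ht)) hrange_le
  -- sProd I⁻¹ N is contained in the stabilizer
  have hP_le : sProd (fracDual R I) N ≤ stabSub f g N := by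
    rw [sProd, Submodule.span_le]
    rintro u ⟨x, hx, v, hv, rfl⟩
    obtain ⟨r, hr⟩ := hx f hfI
    obtain ⟨s, hs⟩ := hx g hgI
    constructor
    · show f • x • v ∈ N
      rw [smul_smul, mul_comm, ← hr, algebraMap_smul]
      exact N.smul_mem r hv
    · show g • x • v ∈ N
      rw [smul_smul, mul_comm, ← hs, algebraMap_smul]
      exact N.smul_mem s hv
  -- the kernel of Ψ
  have hker : LinearMap.ker Ψ =
      Submodule.comap (stabSub f g N).subtype (sProd (fracDual R I) N) := by
    apply le_antisymm
    · -- hard direction: Ψ w = 0 → w ∈ I⁻¹ N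
      intro w hw
      rw [LinearMap.mem_ker] at hw
      simp only [Submodule.mem_comap, Submodule.subtype_apply]
      set π := corePi f g I hfI hgI with hπdef
      have hπsur : Function.Surjective π := by
        intro x
        obtain ⟨c, d, hcd⟩ := Submodule.mem_span_pair.mp (by rw [← hI]; exact x.2)
        refine ⟨![c, d], ?_⟩
        apply Subtype.ext
        show (![c, d] 0 : R) • f + (![c, d] 1 : R) • g = (x : K)
        simpa using hcd
      have hexact := rTensor_exact (R := R) (N : Submodule R V)
        (LinearMap.exact_subtype_ker_map π) hπsur
      set a : (N : Submodule R V) := ⟨g • (w : V), w.2.2⟩ with ha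
      set b : (N : Submodule R V) := ⟨f • (w : V), w.2.1⟩ with hb
      set u : (Fin 2 → R) ⊗[R] N :=
        (Pi.single 0 1 : Fin 2 → R) ⊗ₜ[R] (-a) + (Pi.single 1 1 : Fin 2 → R) ⊗ₜ[R] b with hu
      have hπ0 : π (Pi.single 0 1) = f' := by
        apply Subtype.ext
        show ((Pi.single 0 1 : Fin 2 → R) 0) • f + ((Pi.single 0 1 : Fin 2 → R) 1) • g = f
        rw [Pi.single_eq_same, Pi.single_eq_of_ne (by decide), one_smul, zero_smul, add_zero]
      have hπ1 : π (Pi.single 1 1) = g' := by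
        apply Subtype.ext
        show ((Pi.single 1 1 : Fin 2 → R) 0) • f + ((Pi.single 1 1 : Fin 2 → R) 1) • g = g
        rw [Pi.single_eq_same, Pi.single_eq_of_ne (by decide), one_smul, zero_smul, zero_add]
      have hu0 : LinearMap.rTensor (N : Submodule R V) π u = 0 := by
        rw [hu, map_add, LinearMap.rTensor_tmul, LinearMap.rTensor_tmul, hπ0, hπ1,
          tmul_neg, ← hw, hΨ, corePsi_apply, ← ha, ← hb]
        abel
      obtain ⟨z, hz⟩ := (hexact u).mp hu0
      obtain ⟨S, hS⟩ := TensorProduct.exists_finset z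
      rw [hS, map_sum] at hz
      simp only [LinearMap.rTensor_tmul, Submodule.subtype_apply] at hz
      -- extract the second coordinate
      have hb2 : b = S.sum (fun p => (((p.1 : Fin 2 → R)) 1) • p.2) := by
        have h3 := congrArg (coreEps 1 (N : Submodule R V)) hz
        rw [map_sum] at h3
        simp only [coreEps_tmul] at h3
        rw [hu, map_add, coreEps_tmul, coreEps_tmul, Pi.single_eq_same,
          Pi.single_eq_of_ne (by decide), one_smul, zero_smul, zero_add] at h3
        exact h3.symm
      have hbv : f • (w : V) = S.sum (fun p => (((p.1 : Fin 2 → R)) 1) • ((p.2 : V))) := by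
        have h5 := congrArg ((N : Submodule R V).subtype) hb2
        rw [map_sum] at h5
        simpa using h5
      have hw1 : (w : V) = S.sum
          (fun p => (f⁻¹ * algebraMap R K (((p.1 : Fin 2 → R)) 1)) • (p.2 : V)) := by
        have h6 := congrArg (fun x => f⁻¹ • x) hbv
        rw [inv_smul_smul₀ hf] at h6
        rw [h6, Finset.smul_sum]
        apply Finset.sum_congr rfl
        intro p _
        rw [← algebraMap_smul K (((p.1 : Fin 2 → R)) 1) (p.2 : V), smul_smul]
      rw [hw1]
      apply Submodule.sum_mem
      intro p _
      apply Submodule.subset_span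
      refine ⟨f⁻¹ * algebraMap R K (((p.1 : Fin 2 → R)) 1), ?_, (p.2 : V), p.2.2, rfl⟩
      -- this scalar lies in the inverse ideal
      intro y hy
      obtain ⟨c, d, hcd⟩ := Submodule.mem_span_pair.mp (by rw [← hI]; exact hy)
      have hpz : algebraMap R K (((p.1 : Fin 2 → R)) 0) * f
          + algebraMap R K (((p.1 : Fin 2 → R)) 1) * g = 0 := by
        have h7 : π (p.1 : Fin 2 → R) = 0 := p.1.2
        have h8 := Subtype.ext_iff.mp h7
        rw [← Algebra.smul_def, ← Algebra.smul_def]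
        exact h8
      refine ⟨c * (((p.1 : Fin 2 → R)) 1) - d * (((p.1 : Fin 2 → R)) 0), ?_⟩
      rw [← hcd, Algebra.smul_def, Algebra.smul_def, map_sub, map_mul, map_mul]
      field_simp
      linear_combination (- algebraMap R K d) * hpz
    · -- easy direction: I⁻¹ N ⊆ ker Ψ
      intro w hw
      simp only [Submodule.mem_comap, Submodule.subtype_apply] at hw
      rw [LinearMap.mem_ker]
      have key : ∀ u (hu : u ∈ sProd (fracDual R I) N), Ψ ⟨u, hP_le hu⟩ = 0 := by
        intro u hu
        induction hu using Submodule.span_induction with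
        | mem u hu =>
          obtain ⟨x, hx, v, hv, rfl⟩ := hu
          obtain ⟨r, hr⟩ := hx f hfI
          obtain ⟨s, hs⟩ := hx g hgI
          rw [hΨ, corePsi_apply, sub_eq_zero]
          have e1 : (⟨f • x • v,
              (hP_le (Submodule.subset_span ⟨x, hx, v, hv, rfl⟩)).1⟩ : (N : Submodule R V))
              = r • (⟨v, hv⟩ : (N : Submodule R V)) := by
            apply Subtype.ext
            show f • x • v = r • v
            rw [smul_smul, mul_comm, ← hr, algebraMap_smul]
          have e2 : (⟨g • x • v,
              (hP_le (Submodule.subset_span ⟨x, hx, v, hv, rfl⟩)).2⟩ : (N : Submodule R V))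
              = s • (⟨v, hv⟩ : (N : Submodule R V)) := by
            apply Subtype.ext
            show g • x • v = s • v
            rw [smul_smul, mul_comm, ← hs, algebraMap_smul]
          calc g' ⊗ₜ[R] (⟨f • x • v, _⟩ : (N : Submodule R V))
              = g' ⊗ₜ[R] (r • (⟨v, hv⟩ : (N : Submodule R V))) := by rw [e1]
            _ = (r • g') ⊗ₜ[R] (⟨v, hv⟩ : (N : Submodule R V)) := by
                rw [tmul_smul, smul_tmul']
            _ = (s • f') ⊗ₜ[R] (⟨v, hv⟩ : (N : Submodule R V)) := by
                congr 1
                apply Subtype.ext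
                show r • g = s • f
                rw [Algebra.smul_def, Algebra.smul_def, hr, hs]
                ring
            _ = f' ⊗ₜ[R] (s • (⟨v, hv⟩ : (N : Submodule R V))) := by
                rw [smul_tmul]
            _ = f' ⊗ₜ[R] (⟨g • x • v, _⟩ : (N : Submodule R V)) := by rw [e2]
        | zero => exact map_zero Ψ
        | add u v hu hv ihu ihv =>
          have h9 : Ψ (⟨u, hP_le hu⟩ + ⟨v, hP_le hv⟩) = 0 := by
            rw [map_add, ihu, ihv, add_zero]
          exact h9
        | smul c u hu ih =>
          have h9 : Ψ (c • (⟨u, hP_le hu⟩ : stabSub f g N)) = 0 := by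
            rw [map_smul, ih, smul_zero]
          exact h9
      exact key (w : V) hw
  rw [← hker]
  exact ⟨(LinearEquiv.ofEq _ _ htorsion_eq).trans (LinearMap.quotKerEquivRange Ψ).symm⟩

end CoreMain
section Idents

variable {R K : Type*} [CommRing R] [IsDomain R] [Field K] [Algebra R K] [IsFractionRing R K]
variable {n : ℕ}

lemma dual_prod_eq_stab (f g : K) (I : Submodule R K) (hI : I = Submodule.span R {f, g})
    (M : Submodule R (Fin n → K)) :
    dualSubmodule R (prodSubmodule I M) = stabSub f g (dualSubmodule R M) := by
  have hfI : f ∈ I := by rw [hI]; exact Submodule.subset_span (by simp)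
  have hgI : g ∈ I := by rw [hI]; exact Submodule.subset_span (by simp)
  ext w
  constructor
  · intro hw
    constructor
    · intro m hm
      obtain ⟨r, hr⟩ := hw (f • m) (Submodule.subset_span ⟨f, hfI, m, hm, rfl⟩)
      refine ⟨r, ?_⟩
      rw [smul_dotProduct, ← dotProduct_smul]
      exact hr
    · intro m hm
      obtain ⟨r, hr⟩ := hw (g • m) (Submodule.subset_span ⟨g, hgI, m, hm, rfl⟩)
      refine ⟨r, ?_⟩
      rw [smul_dotProduct, ← dotProduct_smul]
      exact hr
  · rintro ⟨h1, h2⟩ u hu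
    induction hu using Submodule.span_induction with
    | mem u hu =>
      obtain ⟨x, hx, m, hm, rfl⟩ := hu
      obtain ⟨c, d, hcd⟩ := Submodule.mem_span_pair.mp (by rw [← hI]; exact hx)
      obtain ⟨r1, hr1⟩ := h1 m hm
      obtain ⟨r2, hr2⟩ := h2 m hm
      refine ⟨c * r1 + d * r2, ?_⟩
      rw [dotProduct_smul, smul_eq_mul]
      rw [smul_dotProduct, smul_eq_mul] at hr1 hr2
      have hcd' : algebraMap R K c * f + algebraMap R K d * g = x := by
        rw [← Algebra.smul_def, ← Algebra.smul_def]; exact hcd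
      rw [map_add, map_mul, map_mul]
      linear_combination (algebraMap R K c) * hr1 + (algebraMap R K d) * hr2 +
        (dotProduct w m) * hcd'
    | zero => exact ⟨0, by simp⟩
    | add u v hu hv ihu ihv =>
      obtain ⟨r, hr⟩ := ihu
      obtain ⟨r', hr'⟩ := ihv
      exact ⟨r + r', by rw [map_add, hr, hr', dotProduct_add]⟩
    | smul c u hu ih =>
      obtain ⟨r, hr⟩ := ih
      refine ⟨c * r, ?_⟩
      rw [map_mul, hr, dotProduct_smul, Algebra.smul_def]

lemma fracDual_mul_eq_stab (f g : K) (I : Submodule R K) (hI : I = Submodule.span R {f, g}) :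
    fracDual R (I * I) = stabSub f g (fracDual R I) := by
  have hfI : f ∈ I := by rw [hI]; exact Submodule.subset_span (by simp)
  have hgI : g ∈ I := by rw [hI]; exact Submodule.subset_span (by simp)
  ext x
  constructor
  · intro hx
    constructor
    · intro y hy
      obtain ⟨r, hr⟩ := hx (f * y) (Submodule.mul_mem_mul hfI hy)
      refine ⟨r, ?_⟩
      rw [smul_eq_mul]
      rw [hr]; ring
    · intro y hy
      obtain ⟨r, hr⟩ := hx (g * y) (Submodule.mul_mem_mul hgI hy)
      refine ⟨r, ?_⟩
      rw [smul_eq_mul]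
      rw [hr]; ring
  · rintro ⟨h1, h2⟩ y hy
    induction hy using Submodule.mul_induction_on' with
    | mem_mul_mem a ha b hb =>
      obtain ⟨c, d, hcd⟩ := Submodule.mem_span_pair.mp (by rw [← hI]; exact ha)
      obtain ⟨r1, hr1⟩ := h1 b hb
      obtain ⟨r2, hr2⟩ := h2 b hb
      refine ⟨c * r1 + d * r2, ?_⟩
      rw [smul_eq_mul] at hr1 hr2
      have hcd' : algebraMap R K c * f + algebraMap R K d * g = a := by
        rw [← Algebra.smul_def, ← Algebra.smul_def]; exact hcd
      rw [map_add, map_mul, map_mul]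
      linear_combination (algebraMap R K c) * hr1 + (algebraMap R K d) * hr2 +
        (x * b) * hcd'
    | add a ha b hb iha ihb =>
      obtain ⟨r, hr⟩ := iha
      obtain ⟨r', hr'⟩ := ihb
      exact ⟨r + r', by rw [map_add, hr, hr', mul_add]⟩

lemma sProd_fracDual_eq_mul (I J : Submodule R K) :
    sProd (fracDual R I) (fracDual R J) = fracDual R I * fracDual R J := by
  apply le_antisymm
  · rw [sProd, Submodule.span_le]
    rintro u ⟨x, hx, v, hv, rfl⟩
    exact Submodule.mul_mem_mul hx hv
  · rw [Submodule.mul_le]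
    intro a ha b hb
    exact Submodule.subset_span ⟨a, ha, b, hb, (smul_eq_mul a b).symm⟩

lemma prodSubmodule_eq_sProd (I : Submodule R K) (M : Submodule R (Fin n → K)) :
    prodSubmodule I M = sProd I M := rfl

end Idents
section HomFrac

variable {R K : Type*} [CommRing R] [IsDomain R] [Field K] [Algebra R K] [IsFractionRing R K]

lemma fracDual_spec {I : Submodule R K} (x : fracDual R I) {y : K} (hy : y ∈ I) :
    ∃ r : R, algebraMap R K r = (x : K) * y := x.2 y hy

noncomputable def fdFun (I : Submodule R K) (x : fracDual R I) (y : I) : R :=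
  (fracDual_spec x y.2).choose

lemma fdFun_spec (I : Submodule R K) (x : fracDual R I) (y : I) :
    algebraMap R K (fdFun I x y) = (x : K) * (y : K) :=
  (fracDual_spec x y.2).choose_spec

noncomputable def fracToHom (I : Submodule R K) :
    (fracDual R I) →ₗ[R] ((I : Submodule R K) →ₗ[R] R) where
  toFun x :=
    { toFun := fun y => fdFun I x y
      map_add' := by
        intro y z
        apply IsFractionRing.injective R K
        rw [map_add, fdFun_spec, fdFun_spec, fdFun_spec, Submodule.coe_add, mul_add]
      map_smul' := by
        intro c y
        apply IsFractionRing.injective R K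
        rw [RingHom.id_apply, Algebra.smul_def, map_mul, fdFun_spec, fdFun_spec,
          SetLike.val_smul, Algebra.smul_def]
        simp only [Algebra.algebraMap_self, RingHom.id_apply]
        ring }
  map_add' := by
    intro x x'
    apply LinearMap.ext
    intro y
    apply IsFractionRing.injective R K
    show algebraMap R K (fdFun I (x + x') y) = algebraMap R K (fdFun I x y + fdFun I x' y)
    rw [map_add, fdFun_spec, fdFun_spec, fdFun_spec, Submodule.coe_add, add_mul]
  map_smul' := by
    intro c x
    apply LinearMap.ext
    intro y
    apply IsFractionRing.injective R K
    show algebraMap R K (fdFun I (c • x) y) = algebraMap R K (c • fdFun I x y)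
    rw [Algebra.smul_def, map_mul, fdFun_spec, fdFun_spec, SetLike.val_smul, Algebra.smul_def]
    simp only [Algebra.algebraMap_self, RingHom.id_apply]
    ring

lemma fracToHom_bijective (f : K) (hf : f ≠ 0) (I : Submodule R K) (hfI : f ∈ I) :
    Function.Bijective (fracToHom I) := by
  constructor
  · intro x x' h
    apply Subtype.ext
    have h1 := congrArg (fun φ => algebraMap R K (φ ⟨f, hfI⟩)) h
    simp only [fracToHom, LinearMap.coe_mk, AddHom.coe_mk] at h1
    rw [fdFun_spec, fdFun_spec] at h1
    exact mul_right_cancel₀ hf h1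
  · intro φ
    set x : K := algebraMap R K (φ ⟨f, hfI⟩) * f⁻¹ with hx
    have hval : ∀ y : I, algebraMap R K (φ y) = x * (y : K) := by
      intro y
      obtain ⟨⟨p, q⟩, hpq⟩ := IsLocalization.surj (M := nonZeroDivisors R) ((y : K) * f⁻¹)
      simp only at hpq
      have hq0 : algebraMap R K (q : R) ≠ 0 := by
        simpa using (IsFractionRing.to_map_ne_zero_iff_ne_zero (K := K)).mpr
          (nonZeroDivisors.ne_zero q.2)
      have hqy : algebraMap R K (q : R) * (y : K) = algebraMap R K p * f := by
        field_simp at hpq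
        linear_combination hpq
      have hsm : (q : R) • y = p • (⟨f, hfI⟩ : I) := by
        apply Subtype.ext
        show (q : R) • (y : K) = p • f
        rw [Algebra.smul_def, Algebra.smul_def, hqy]
      have key : algebraMap R K ((q : R) * φ y) = algebraMap R K (p * φ ⟨f, hfI⟩) := by
        congr 1
        have := congrArg φ hsm
        rw [map_smul, map_smul] at this
        simpa [smul_eq_mul] using this
      rw [map_mul, map_mul] at key
      rw [hx]
      apply mul_left_cancel₀ hq0
      have hgoal : algebraMap R K (q:R) * algebraMap R K (φ y) =
          algebraMap R K (q:R) * (algebraMap R K (φ ⟨f, hfI⟩) * f⁻¹ * (y:K)) := by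
        rw [mul_comm (algebraMap R K (φ ⟨f, hfI⟩)) f⁻¹]
        linear_combination key - (f⁻¹ * algebraMap R K (φ ⟨f, hfI⟩)) * hqy -
          (algebraMap R K p * algebraMap R K (φ ⟨f, hfI⟩)) * inv_mul_cancel₀ hf
      exact hgoal
    have hxmem : x ∈ fracDual R I := fun y hy => ⟨φ ⟨y, hy⟩, hval ⟨y, hy⟩⟩
    refine ⟨⟨x, hxmem⟩, ?_⟩
    apply LinearMap.ext
    intro y
    apply IsFractionRing.injective R K
    show algebraMap R K (fdFun I ⟨x, hxmem⟩ y) = algebraMap R K (φ y)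
    rw [fdFun_spec, hval y]

end HomFrac
section HomDual

variable {R K : Type*} [CommRing R] [IsDomain R] [Field K] [Algebra R K] [IsFractionRing R K]
variable {n : ℕ}

lemma dualSubmodule_spec {M : Submodule R (Fin n → K)} (v : dualSubmodule R M) {m : Fin n → K}
    (hm : m ∈ M) :
    ∃ r : R, algebraMap R K r = dotProduct (v : Fin n → K) m := v.2 m hm

noncomputable def dsFun (M : Submodule R (Fin n → K)) (v : dualSubmodule R M) (m : M) : R :=
  (dualSubmodule_spec v m.2).choose

lemma dsFun_spec (M : Submodule R (Fin n → K)) (v : dualSubmodule R M) (m : M) :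
    algebraMap R K (dsFun M v m) = dotProduct (v : Fin n → K) (m : Fin n → K) :=
  (dualSubmodule_spec v m.2).choose_spec

noncomputable def dualToHom (M : Submodule R (Fin n → K)) :
    dualSubmodule R M →ₗ[R] (M →ₗ[R] R) where
  toFun v :=
    { toFun := fun m => dsFun M v m
      map_add' := by
        intro y z
        apply IsFractionRing.injective R K
        rw [map_add, dsFun_spec, dsFun_spec, dsFun_spec, Submodule.coe_add,
          dotProduct_add]
      map_smul' := by
        intro c y
        apply IsFractionRing.injective R K
        rw [RingHom.id_apply, Algebra.smul_def, map_mul, dsFun_spec, dsFun_spec,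
          SetLike.val_smul, dotProduct_smul, Algebra.smul_def]
        simp only [Algebra.algebraMap_self, RingHom.id_apply] }
  map_add' := by
    intro v v'
    apply LinearMap.ext
    intro m
    apply IsFractionRing.injective R K
    show algebraMap R K (dsFun M (v + v') m) = algebraMap R K (dsFun M v m + dsFun M v' m)
    rw [map_add, dsFun_spec, dsFun_spec, dsFun_spec, Submodule.coe_add, add_dotProduct]
  map_smul' := by
    intro c v
    apply LinearMap.ext
    intro m
    apply IsFractionRing.injective R K
    show algebraMap R K (dsFun M (c • v) m) = algebraMap R K (c • dsFun M v m)
    rw [Algebra.smul_def, map_mul, dsFun_spec, dsFun_spec, SetLike.val_smul,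
      smul_dotProduct, Algebra.smul_def]
    simp only [Algebra.algebraMap_self, RingHom.id_apply]

lemma dualToHom_bijective (M : Submodule R (Fin n → K))
    (hMrk : Submodule.span K (M : Set (Fin n → K)) = ⊤) :
    Function.Bijective (dualToHom M) := by
  constructor
  · -- injectivity
    intro v v' h
    have hdot : ∀ m ∈ M, dotProduct ((v : Fin n → K) - (v' : Fin n → K)) m = 0 := by
      intro m hm
      have h1 := congrArg (fun φ => algebraMap R K (φ ⟨m, hm⟩)) h
      simp only [dualToHom, LinearMap.coe_mk, AddHom.coe_mk] at h1
      rw [dsFun_spec, dsFun_spec] at h1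
      rw [sub_dotProduct, h1, sub_self]
    set L : (Fin n → K) →ₗ[K] K :=
      { toFun := fun u => dotProduct ((v : Fin n → K) - (v' : Fin n → K)) u
        map_add' := fun a b => dotProduct_add _ a b
        map_smul' := fun c a => by
          simp only [RingHom.id_apply]
          rw [dotProduct_smul, smul_eq_mul] } with hL
    have hker : ∀ u, L u = 0 := by
      intro u
      have hu : u ∈ Submodule.span K (M : Set (Fin n → K)) := by rw [hMrk]; trivial
      have hle : Submodule.span K (M : Set (Fin n → K)) ≤ LinearMap.ker L :=
        Submodule.span_le.mpr (fun m hm => LinearMap.mem_ker.mpr (hdot m hm))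
      exact LinearMap.mem_ker.mp (hle hu)
    apply Subtype.ext
    funext j
    have hj := hker (Pi.single j 1)
    rw [hL] at hj
    simp only [LinearMap.coe_mk, AddHom.coe_mk] at hj
    rw [dotProduct_single, mul_one, Pi.sub_apply, sub_eq_zero] at hj
    exact hj
  · -- surjectivity
    intro φ
    obtain ⟨b, hbM, hbspan, hbli⟩ := exists_linearIndependent K (M : Set (Fin n → K))
    rw [hMrk] at hbspan
    haveI : Fintype b := (hbli.setFinite).fintype
    set bs : Module.Basis b K (Fin n → K) := Module.Basis.mk hbli (by rw [Subtype.range_coe, hbspan]) with hbs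
    set ℓ : (Fin n → K) →ₗ[K] K :=
      bs.constr K (fun e => algebraMap R K (φ ⟨e.1, hbM e.2⟩)) with hℓ
    set v : Fin n → K := fun j => ℓ (Pi.single j 1) with hv
    have hdot : ∀ u, dotProduct v u = ℓ u := by
      intro u
      have hu := (Pi.basisFun K (Fin n)).sum_repr u
      simp only [Pi.basisFun_repr, Pi.basisFun_apply] at hu
      conv_rhs => rw [← hu]
      rw [map_sum]
      rw [dotProduct]
      apply Finset.sum_congr rfl
      intro j _
      rw [map_smul, smul_eq_mul, hv, mul_comm]
    have hval : ∀ m : M, algebraMap R K (φ m) = dotProduct v (m : Fin n → K) := by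
      intro m
      have hm := bs.sum_repr (m : Fin n → K)
      obtain ⟨d, hd⟩ := IsLocalization.exist_integer_multiples_of_finite
        (nonZeroDivisors R) (fun e : b => bs.repr (m : Fin n → K) e)
      choose rr hrr using hd
      have hd0 : algebraMap R K (d : R) ≠ 0 := by
        simpa using (IsFractionRing.to_map_ne_zero_iff_ne_zero (K := K)).mpr
          (nonZeroDivisors.ne_zero d.2)
      have hdmv : (d : R) • (m : Fin n → K) = ∑ e : b, rr e • (e : Fin n → K) := by
        rw [← hm, Finset.smul_sum]
        apply Finset.sum_congr rfl
        intro e _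
        rw [← smul_assoc, ← hrr e, algebraMap_smul, hbs, Module.Basis.mk_apply]
      have hdm : ((d : R) • m : M) = ∑ e : b, rr e • (⟨e.1, hbM e.2⟩ : M) := by
        apply Subtype.ext
        have hco : ((∑ e : b, rr e • (⟨e.1, hbM e.2⟩ : M) : M) : Fin n → K) =
            ∑ e : b, rr e • (e : Fin n → K) := by
          rw [show ((∑ e : b, rr e • (⟨e.1, hbM e.2⟩ : M) : M) : Fin n → K) =
            M.subtype (∑ e : b, rr e • (⟨e.1, hbM e.2⟩ : M)) from rfl, map_sum]
          apply Finset.sum_congr rfl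
          intro e _
          rw [map_smul]
          rfl
        rw [hco]
        exact hdmv
      have h1 : (d : R) * φ m = ∑ e : b, rr e * φ ⟨e.1, hbM e.2⟩ := by
        have h1' := congrArg φ hdm
        rw [map_smul, map_sum] at h1'
        simp only [map_smul, smul_eq_mul] at h1'
        exact h1'
      have h1alg : algebraMap R K (d : R) * algebraMap R K (φ m) =
          ∑ e : b, algebraMap R K (rr e) * algebraMap R K (φ ⟨e.1, hbM e.2⟩) := by
        have := congrArg (algebraMap R K) h1
        rw [map_mul, map_sum] at this
        simpa only [map_mul] using this
      have hconstr : ∀ e : b, ℓ (e : Fin n → K) = algebraMap R K (φ ⟨e.1, hbM e.2⟩) := by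
        intro e
        have : ℓ (bs e) = algebraMap R K (φ ⟨e.1, hbM e.2⟩) := by
          rw [hℓ]
          exact Module.Basis.constr_basis bs K _ e
        rwa [show bs e = (e : Fin n → K) by rw [hbs, Module.Basis.mk_apply]] at this
      have h2 : algebraMap R K (d : R) * ℓ (m : Fin n → K) =
          ∑ e : b, algebraMap R K (rr e) * algebraMap R K (φ ⟨e.1, hbM e.2⟩) := by
        calc algebraMap R K (d : R) * ℓ (m : Fin n → K)
            = ℓ (algebraMap R K (d : R) • (m : Fin n → K)) := by
              rw [map_smul, smul_eq_mul]
          _ = ℓ ((d : R) • (m : Fin n → K)) := by rw [algebraMap_smul]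
          _ = ℓ (∑ e : b, rr e • (e : Fin n → K)) := by rw [hdmv]
          _ = ∑ e : b, ℓ (rr e • (e : Fin n → K)) := by rw [map_sum]
          _ = ∑ e : b, algebraMap R K (rr e) * algebraMap R K (φ ⟨e.1, hbM e.2⟩) := by
              apply Finset.sum_congr rfl
              intro e _
              rw [← algebraMap_smul K (rr e) ((e : Fin n → K)), map_smul, smul_eq_mul,
                hconstr e]
      have h3 : ℓ (m : Fin n → K) = algebraMap R K (φ m) := by
        apply mul_left_cancel₀ hd0
        rw [h2, h1alg]
      rw [hdot, h3]
    have hvmem : v ∈ dualSubmodule R M := fun m hm => ⟨φ ⟨m, hm⟩, hval ⟨m, hm⟩⟩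
    refine ⟨⟨v, hvmem⟩, ?_⟩
    apply LinearMap.ext
    intro m
    apply IsFractionRing.injective R K
    show algebraMap R K (dsFun M ⟨v, hvmem⟩ m) = algebraMap R K (φ m)
    rw [dsFun_spec, hval m]

end HomDual
set_option maxHeartbeats 2000000 in
/-- Let `R` be a domain with fraction field `K`, `I = (f, g)` a two-generated nonzero
fractional ideal, and `M ⊆ K^n` a finitely generated rank-`n` submodule. Then
`T(I ⊗ Hom_R(M, R)) ≅ (IM)⁻¹/(I⁻¹M⁻¹)`, and in particular
`T(I ⊗ Hom_R(I, R)) ≅ (I²)⁻¹/(I⁻¹)²`. -/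
theorem stmt6 {R K : Type*} [CommRing R] [IsDomain R] [Field K] [Algebra R K]
    [IsFractionRing R K] {n : ℕ} (f g : K) (hf : f ≠ 0) (hg : g ≠ 0)
    (I : Submodule R K) (hI : I = Submodule.span R {f, g})
    (M : Submodule R (Fin n → K)) (hM : M.FG)
    (hMrk : Submodule.span K (M : Set (Fin n → K)) = ⊤) :
    Nonempty ((Submodule.torsion R (I ⊗[R] (M →ₗ[R] R))) ≃ₗ[R]
      ((dualSubmodule R (prodSubmodule I M)) ⧸
        Submodule.comap (dualSubmodule R (prodSubmodule I M)).subtype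
          (prodSubmodule (fracDual R I) (dualSubmodule R M)))) ∧
    Nonempty ((Submodule.torsion R (I ⊗[R] ((I : Submodule R K) →ₗ[R] R))) ≃ₗ[R]
      ((fracDual R (I * I)) ⧸
        Submodule.comap (fracDual R (I * I)).subtype
          (fracDual R I * fracDual R I))) := by
  have hfI : f ∈ I := by rw [hI]; exact Submodule.subset_span (by simp)
  constructor
  · have e1 : (M →ₗ[R] R) ≃ₗ[R] dualSubmodule R M :=
      (LinearEquiv.ofBijective (dualToHom M) (dualToHom_bijective M hMrk)).symm
    have e2 : (I ⊗[R] (M →ₗ[R] R)) ≃ₗ[R] (I ⊗[R] dualSubmodule R M) :=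
      TensorProduct.congr (LinearEquiv.refl R I) e1
    have e3 := torsionEquiv e2
    obtain ⟨e4⟩ := core_torsion f g hf hg I hI (dualSubmodule R M)
    exact ⟨(e3.trans e4).trans (quotCongr (dual_prod_eq_stab f g I hI M).symm
      (prodSubmodule_eq_sProd (fracDual R I) (dualSubmodule R M)).symm)⟩
  · have e1 : ((I : Submodule R K) →ₗ[R] R) ≃ₗ[R] fracDual R I :=
      (LinearEquiv.ofBijective (fracToHom I) (fracToHom_bijective f hf I hfI)).symm
    have e2 : (I ⊗[R] ((I : Submodule R K) →ₗ[R] R)) ≃ₗ[R] (I ⊗[R] fracDual R I) :=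
      TensorProduct.congr (LinearEquiv.refl R I) e1
    have e3 := torsionEquiv e2
    obtain ⟨e4⟩ := core_torsion f g hf hg I hI (fracDual R I)
    exact ⟨(e3.trans e4).trans (quotCongr (fracDual_mul_eq_stab f g I hI).symm
      (sProd_fracDual_eq_mul I I))⟩
end

section
/- Let S be a numerical semigroup with relative ideals A and B, both minimally generated, and let z be an integer. Then there is a bijection between the connected components of the bipartite graph Γ_z(A,B) and the elements a ⊗ b of A ⊗_S B satisfying a + b = z; the bijection sends the component containing the vertex v_i to the class of a_i ⊗ (z − a_i). -/
/-- The generating relation for the semigroup tensor product `A ⊗_S B`: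
`(s+a, b) ~ (a, s+b)` for `s ∈ S`. -/
def TensorRel (S A B : Set ℤ) (p q : {x : ℤ × ℤ // x.1 ∈ A ∧ x.2 ∈ B}) : Prop :=
  ∃ s ∈ S, ∃ a b : ℤ, (p : ℤ × ℤ) = (s + a, b) ∧ (q : ℤ × ℤ) = (a, s + b)

/-- The semigroup tensor product `A ⊗_S B` of relative ideals `A, B` over `S`:
`(A × B)` modulo the equivalence relation generated by `(s+a, b) ~ (a, s+b)`. -/
def SgTensor (S A B : Set ℤ) : Type :=
  Quot (TensorRel S A B)

/-- The well-defined sum map `χ : A ⊗_S B → ℤ`, `a ⊗ b ↦ a + b`. -/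
def tensorSum (S A B : Set ℤ) : SgTensor S A B → ℤ :=
  Quot.lift (fun p => (p : ℤ × ℤ).1 + (p : ℤ × ℤ).2) (by
    rintro p q ⟨s, hs, a, b, hp, hq⟩
    show (p : ℤ × ℤ).1 + (p : ℤ × ℤ).2 = (q : ℤ × ℤ).1 + (q : ℤ × ℤ).2
    rw [hp, hq]
    dsimp only
    ring)

/-- The bipartite graph `Γ_z(A,B)`: vertices `v_i` for generators `a_i` of `A` with
`z - a_i ∈ B` and `w_j` for generators `b_j` of `B` with `z - b_j ∈ A`; edges `v_i w_j`
when `z - a_i - b_j ∈ S`. -/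
def gammaGraph (S : Set ℤ) {m n : ℕ} (a : Fin m → ℤ) (b : Fin n → ℤ) (z : ℤ)
    (VA : Set (Fin m)) (VB : Set (Fin n)) :
    SimpleGraph (VA ⊕ VB) where
  Adj x y :=
    (∃ i j, x = Sum.inl i ∧ y = Sum.inr j ∧ z - a i.1 - b j.1 ∈ S) ∨
    (∃ i j, x = Sum.inr j ∧ y = Sum.inl i ∧ z - a i.1 - b j.1 ∈ S)
  symm := ⟨fun x y h =>
    h.elim (fun ⟨i, j, hx, hy, hs⟩ => Or.inr ⟨i, j, hy, hx, hs⟩)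
      (fun ⟨i, j, hx, hy, hs⟩ => Or.inl ⟨i, j, hy, hx, hs⟩)⟩
  loopless := ⟨by
    rintro x (⟨i, j, hx, hy, _⟩ | ⟨i, j, hx, hy, _⟩) <;> subst hx <;> exact by cases hy⟩

/-- Let `S` be a numerical semigroup with relative ideals `A, B` minimally generated by
`a_1, …, a_m` and `b_1, …, b_n`, and let `z ∈ ℤ`. Then there is a bijection between the
connected components of `Γ_z(A,B)` and the elements `a ⊗ b ∈ A ⊗_S B` with `a + b = z`,
sending the component of `v_i` to the class of `a_i ⊗ (z − a_i)` (and the component of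
`w_j` to the class of `(z − b_j) ⊗ b_j`). -/
theorem stmt10 (S A B : Set ℤ)
    (hS0 : (0 : ℤ) ∈ S) (hSadd : ∀ x ∈ S, ∀ y ∈ S, x + y ∈ S)
    (hSnn : ∀ x ∈ S, (0 : ℤ) ≤ x) (hScof : {x : ℤ | 0 ≤ x ∧ x ∉ S}.Finite)
    {m n : ℕ} (a : Fin m → ℤ) (b : Fin n → ℤ)
    (hA : A = {z | ∃ i, ∃ s ∈ S, z = a i + s})
    (hB : B = {z | ∃ j, ∃ s ∈ S, z = b j + s})
    (hAmin : ∀ i j, (∃ s ∈ S, a i = a j + s) → i = j)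
    (hBmin : ∀ i j, (∃ s ∈ S, b i = b j + s) → i = j)
    (z : ℤ) :
    ∃ e : SimpleGraph.ConnectedComponent
          (gammaGraph S a b z {i | z - a i ∈ B} {j | z - b j ∈ A}) ≃
        {t : SgTensor S A B // tensorSum S A B t = z},
      (∀ i : {i : Fin m | z - a i ∈ B},
        e (SimpleGraph.connectedComponentMk _ (Sum.inl i)) =
          ⟨Quot.mk _ ⟨(a i.1, z - a i.1),
              ⟨by rw [hA]; exact ⟨i.1, 0, hS0, by ring⟩, i.2⟩⟩,
            by show a i.1 + (z - a i.1) = z; ring⟩) ∧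
      (∀ j : {j : Fin n | z - b j ∈ A},
        e (SimpleGraph.connectedComponentMk _ (Sum.inr j)) =
          ⟨Quot.mk _ ⟨(z - b j.1, b j.1),
              ⟨j.2, by rw [hB]; exact ⟨j.1, 0, hS0, by ring⟩⟩⟩,
            by show (z - b j.1) + b j.1 = z; ring⟩) := by
  classical
  -- closure of A and B under adding elements of S
  have hBc : ∀ x ∈ B, ∀ s ∈ S, x + s ∈ B := by
    intro x hx s hs
    rw [hB] at hx ⊢
    obtain ⟨j, t, ht, rfl⟩ := hx
    exact ⟨j, t + s, hSadd t ht s hs, by ring⟩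
  have hAc : ∀ x ∈ A, ∀ s ∈ S, x + s ∈ A := by
    intro x hx s hs
    rw [hA] at hx ⊢
    obtain ⟨i, t, ht, rfl⟩ := hx
    exact ⟨i, t + s, hSadd t ht s hs, by ring⟩
  have hAmem : ∀ x : ℤ, x ∈ A → ∃ i, ∃ s ∈ S, x = a i + s := by
    intro x hx; rw [hA] at hx; exact hx
  set VA : Set (Fin m) := {i | z - a i ∈ B} with hVA
  set VB : Set (Fin n) := {j | z - b j ∈ A} with hVB
  set G := gammaGraph S a b z VA VB with hG
  -- adjacency lemma
  have adjVW : ∀ (i : Fin m) (hi : i ∈ VA) (j : Fin n) (hj : j ∈ VB)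
      (x y s t : ℤ), s ∈ S → t ∈ S → x + y = z → x = a i + s → y = b j + t →
      G.Adj (Sum.inl ⟨i, hi⟩) (Sum.inr ⟨j, hj⟩) := by
    intro i hi j hj x y s t hs ht hxy hx hy
    refine Or.inl ⟨⟨i, hi⟩, ⟨j, hj⟩, rfl, rfl, ?_⟩
    have h1 : z - a i - b j = s + t := by omega
    rw [h1]
    exact hSadd s hs t ht
  -- two valid generator choices for the same pair give the same component
  have sameComp : ∀ (x y : ℤ), x + y = z → y ∈ B →
      ∀ (i : Fin m) (hi : i ∈ VA) (s : ℤ), s ∈ S → x = a i + s →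
      ∀ (i' : Fin m) (hi' : i' ∈ VA) (s' : ℤ), s' ∈ S → x = a i' + s' →
      G.connectedComponentMk (Sum.inl ⟨i, hi⟩) = G.connectedComponentMk (Sum.inl ⟨i', hi'⟩) := by
    intro x y hxy hy i hi s hs hx i' hi' s' hs' hx'
    rw [hB] at hy
    obtain ⟨j, t, ht, hyj⟩ := hy
    have hxA : x ∈ A := by rw [hA]; exact ⟨i, s, hs, hx⟩
    have hj : j ∈ VB := by
      show z - b j ∈ A
      have h1 : z - b j = x + t := by omega
      rw [h1]
      exact hAc x hxA t ht
    have h1 := adjVW i hi j hj x y s t hs ht hxy hx hyj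
    have h2 := adjVW i' hi' j hj x y s' t hs' ht hxy hx' hyj
    exact (SimpleGraph.ConnectedComponent.sound h1.reachable).trans
      (SimpleGraph.ConnectedComponent.sound h2.reachable).symm
  -- the sum is invariant along the generated equivalence
  have sumRel : ∀ p q, TensorRel S A B p q →
      (p : ℤ × ℤ).1 + (p : ℤ × ℤ).2 = (q : ℤ × ℤ).1 + (q : ℤ × ℤ).2 := by
    rintro p q ⟨s, _, α, β, hp, hq⟩
    rw [hp, hq]
    dsimp only
    ring
  have sumEqv : ∀ p q, Relation.EqvGen (TensorRel S A B) p q →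
      (p : ℤ × ℤ).1 + (p : ℤ × ℤ).2 = (q : ℤ × ℤ).1 + (q : ℤ × ℤ).2 := by
    intro p q h
    induction h with
    | rel p q hpq => exact sumRel _ _ hpq
    | refl p => rfl
    | symm p q h ih => exact ih.symm
    | trans p q r h1 h2 ih1 ih2 => exact ih1.trans ih2
  -- key invariance lemma
  have key : ∀ p q : {x : ℤ × ℤ // x.1 ∈ A ∧ x.2 ∈ B},
      Relation.EqvGen (TensorRel S A B) p q →
      (p : ℤ × ℤ).1 + (p : ℤ × ℤ).2 = z →
      ∀ (i : Fin m) (hi : i ∈ VA) (s : ℤ), s ∈ S → (p : ℤ × ℤ).1 = a i + s →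
      ∀ (i' : Fin m) (hi' : i' ∈ VA) (s' : ℤ), s' ∈ S → (q : ℤ × ℤ).1 = a i' + s' →
      G.connectedComponentMk (Sum.inl ⟨i, hi⟩) = G.connectedComponentMk (Sum.inl ⟨i', hi'⟩) := by
    intro p q h
    induction h with
    | rel p q hpq =>
      intro hz i hi s hs hx i' hi' s' hs' hx'
      obtain ⟨s0, hs0, α, β, hp, hq⟩ := hpq
      have e1 : (p : ℤ × ℤ).1 = s0 + α := by rw [hp]
      have e2 : α = a i' + s' := by rw [hq] at hx'; exact hx'
      have hx2 : (p : ℤ × ℤ).1 = a i' + (s' + s0) := by rw [e1, e2]; ring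
      exact sameComp (p : ℤ × ℤ).1 (p : ℤ × ℤ).2 hz p.2.2 i hi s hs hx i' hi'
        (s' + s0) (hSadd s' hs' s0 hs0) hx2
    | refl p =>
      intro hz i hi s hs hx i' hi' s' hs' hx'
      exact sameComp (p : ℤ × ℤ).1 (p : ℤ × ℤ).2 hz p.2.2 i hi s hs hx i' hi' s' hs' hx'
    | symm x y h ih =>
      intro hz i hi s hs hx i' hi' s' hs' hx'
      have hzx : (x : ℤ × ℤ).1 + (x : ℤ × ℤ).2 = z := (sumEqv x y h).trans hz
      exact (ih hzx i' hi' s' hs' hx' i hi s hs hx).symm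
    | trans x y w h1 h2 ih1 ih2 =>
      intro hz i hi s hs hx i' hi' s' hs' hx'
      have hzy : (y : ℤ × ℤ).1 + (y : ℤ × ℤ).2 = z := (sumEqv x y h1).symm.trans hz
      obtain ⟨i0, s0, hs0, hx0⟩ := hAmem _ y.2.1
      have hi0 : i0 ∈ VA := by
        show z - a i0 ∈ B
        have h3 : z - a i0 = (y : ℤ × ℤ).2 + s0 := by omega
        rw [h3]
        exact hBc _ y.2.2 s0 hs0
      exact (ih1 hz i hi s hs hx i0 hi0 s0 hs0 hx0).trans
        (ih2 hzy i0 hi0 s0 hs0 hx0 i' hi' s' hs' hx')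
  -- the vertex map
  let f : (↥VA ⊕ ↥VB) → {t : SgTensor S A B // tensorSum S A B t = z} :=
    Sum.elim
      (fun i => ⟨Quot.mk _ ⟨(a i.1, z - a i.1),
          ⟨by rw [hA]; exact ⟨i.1, 0, hS0, by ring⟩, i.2⟩⟩,
        by show a i.1 + (z - a i.1) = z; ring⟩)
      (fun j => ⟨Quot.mk _ ⟨(z - b j.1, b j.1),
          ⟨j.2, by rw [hB]; exact ⟨j.1, 0, hS0, by ring⟩⟩⟩,
        by show (z - b j.1) + b j.1 = z; ring⟩)
  have fadj : ∀ u v, G.Adj u v → f u = f v := by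
    intro u v huv
    rcases huv with ⟨i, j, rfl, rfl, hsij⟩ | ⟨i, j, rfl, rfl, hsij⟩
    · apply Subtype.ext
      refine (Quot.sound ⟨z - a i.1 - b j.1, hsij, a i.1, b j.1, ?_, ?_⟩).symm
      · show ((z - b j.1, b j.1) : ℤ × ℤ) = _
        simp only [Prod.mk.injEq]
        exact ⟨by ring, trivial⟩
      · show ((a i.1, z - a i.1) : ℤ × ℤ) = _
        simp only [Prod.mk.injEq]
        exact ⟨trivial, by ring⟩
    · apply Subtype.ext
      refine Quot.sound ⟨z - a i.1 - b j.1, hsij, a i.1, b j.1, ?_, ?_⟩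
      · show ((z - b j.1, b j.1) : ℤ × ℤ) = _
        simp only [Prod.mk.injEq]
        exact ⟨by ring, trivial⟩
      · show ((a i.1, z - a i.1) : ℤ × ℤ) = _
        simp only [Prod.mk.injEq]
        exact ⟨trivial, by ring⟩
  have fwalk : ∀ (u v : ↥VA ⊕ ↥VB) (p : G.Walk u v), p.IsPath → f u = f v := by
    intro u v p hp
    clear hp
    induction p with
    | nil => rfl
    | cons h p ih => exact (fadj _ _ h).trans ih
  let F := SimpleGraph.ConnectedComponent.lift f fwalk
  -- anchors
  have anchor : ∀ u : ↥VA ⊕ ↥VB, ∃ (i : Fin m) (hi : i ∈ VA) (s : ℤ) (_ : s ∈ S)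
      (p : {x : ℤ × ℤ // x.1 ∈ A ∧ x.2 ∈ B}),
      (f u).1 = Quot.mk _ p ∧ (p : ℤ × ℤ).1 + (p : ℤ × ℤ).2 = z ∧
      (p : ℤ × ℤ).1 = a i + s ∧
      G.connectedComponentMk u = G.connectedComponentMk (Sum.inl ⟨i, hi⟩) := by
    rintro (i | j)
    · exact ⟨i.1, i.2, 0, hS0, _, rfl, by dsimp only; ring, by dsimp only; ring, rfl⟩
    · have hjA := j.2
      have hjA' : z - b j.1 ∈ A := hjA
      rw [hA] at hjA'
      obtain ⟨i0, s0, hs0, hx0⟩ := hjA'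
      have hbB : b j.1 ∈ B := by rw [hB]; exact ⟨j.1, 0, hS0, by ring⟩
      have hi0 : i0 ∈ VA := by
        show z - a i0 ∈ B
        have h3 : z - a i0 = b j.1 + s0 := by omega
        rw [h3]
        exact hBc _ hbB s0 hs0
      have hadj := adjVW i0 hi0 j.1 j.2 (z - b j.1) (b j.1) s0 0 hs0 hS0
        (by ring) hx0 (by ring)
      exact ⟨i0, hi0, s0, hs0, _, rfl, by dsimp only; ring, hx0,
        (SimpleGraph.ConnectedComponent.sound hadj.reachable).symm⟩
  have Finj : Function.Injective F := by
    intro c c'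
    refine SimpleGraph.ConnectedComponent.ind₂
      (β := fun c c' => F c = F c' → c = c') ?_ c c'
    intro u u' h
    have h' : f u = f u' := h
    obtain ⟨i, hi, s, hs, p, hp, hpz, hpi, hcomp⟩ := anchor u
    obtain ⟨i', hi', s', hs', p', hp', hpz', hpi', hcomp'⟩ := anchor u'
    have hq : Quot.mk (TensorRel S A B) p = Quot.mk (TensorRel S A B) p' := by
      rw [← hp, ← hp', h']
    have heqv := Quot.eq.mp hq
    exact hcomp.trans ((key p p' heqv hpz i hi s hs hpi i' hi' s' hs' hpi').trans hcomp'.symm)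
  have Fsurj : Function.Surjective F := by
    rintro ⟨t, ht⟩
    obtain ⟨p, rfl⟩ := Quot.exists_rep t
    have hz : (p : ℤ × ℤ).1 + (p : ℤ × ℤ).2 = z := ht
    obtain ⟨i, s, hs, hx⟩ := hAmem _ p.2.1
    have hi : i ∈ VA := by
      show z - a i ∈ B
      have h3 : z - a i = (p : ℤ × ℤ).2 + s := by omega
      rw [h3]
      exact hBc _ p.2.2 s hs
    refine ⟨G.connectedComponentMk (Sum.inl ⟨i, hi⟩), ?_⟩
    apply Subtype.ext
    show Quot.mk _ _ = Quot.mk _ p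
    refine (Quot.sound ⟨s, hs, a i, (p : ℤ × ℤ).2, ?_, ?_⟩).symm
    · exact Prod.ext (by dsimp only; omega) rfl
    · show ((a i, z - a i) : ℤ × ℤ) = _
      exact Prod.ext rfl (by dsimp only; omega)
  refine ⟨Equiv.ofBijective F ⟨Finj, Fsurj⟩, ?_, ?_⟩
  · intro i
    rfl
  · intro j
    apply Subtype.ext
    show (f (Sum.inr j)).1 = _
    rfl
end

section
/- Let S = ⟨a, b⟩ be a numerical semigroup generated by coprime integers 1 < a < b, and let A be a relative ideal of S with minimal generating set of size n. Identify ℤ with ℤ²/(b,−a)ℤ via ψ(overline{(x,y)}) = ax + by. Then one may choose representatives p_i = overline{(x_i, y_i)} of the minimal generators with x_1 < x_2 < ⋯ < x_n < x_1 + b and y_1 > y_2 > ⋯ > y_n > y_1 − a. -/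
/-- Ordering of the minimal generators of a relative ideal of `S = ⟨a,b⟩`: identifying
`ℤ ≅ ℤ²/(b,−a)ℤ` via `ψ(x,y) = ax + by`, one may choose representatives
`p_i = (x_i, y_i)` of the minimal generators with
`x_1 < x_2 < ⋯ < x_n < x_1 + b` and `y_1 > y_2 > ⋯ > y_n > y_1 − a`. -/
theorem stmt11 (a b : ℤ) (ha : 1 < a) (hab : a < b) (hcop : IsCoprime a b)
    (S : Set ℤ) (hS : S = {z | ∃ u v : ℕ, z = a * (u : ℤ) + b * (v : ℤ)})
    (A : Set ℤ) {n : ℕ} (hn : 0 < n) (g : Fin n → ℤ)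
    (hA : A = {z | ∃ i, ∃ s ∈ S, z = g i + s})
    (hmin : ∀ i j, (∃ s ∈ S, g i = g j + s) → i = j) :
    ∃ (σ : Equiv.Perm (Fin n)) (x y : Fin n → ℤ),
      (∀ i, a * x i + b * y i = g (σ i)) ∧
      StrictMono x ∧ StrictAnti y ∧
      (∀ i, x i < x ⟨0, hn⟩ + b) ∧
      (∀ i, y ⟨0, hn⟩ - a < y i) := by
  obtain ⟨u, v, huv⟩ := hcop
  have hb : (0:ℤ) < b := by linarith
  have hbne : b ≠ 0 := ne_of_gt hb
  have key : ∀ i j (p q : ℤ), 0 ≤ p → 0 ≤ q → g i = g j + (a * p + b * q) → i = j := by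
    intro i j p q hp hq h
    refine hmin i j ⟨a * p + b * q, ?_, h⟩
    rw [hS]
    exact ⟨p.toNat, q.toNat, by rw [Int.toNat_of_nonneg hp, Int.toNat_of_nonneg hq]⟩
  obtain ⟨x0, hx0def⟩ : ∃ x0 : Fin n → ℤ, ∀ i, x0 i = (u * g i) % b := ⟨_, fun _ => rfl⟩
  obtain ⟨y0, hy0def⟩ : ∃ y0 : Fin n → ℤ, ∀ i, y0 i = g i * v + a * ((u * g i) / b) :=
    ⟨_, fun _ => rfl⟩
  have hx0nn : ∀ i, 0 ≤ x0 i := fun i => (hx0def i) ▸ Int.emod_nonneg _ hbne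
  have hx0lt : ∀ i, x0 i < b := fun i => (hx0def i) ▸ Int.emod_lt_of_pos _ hb
  have heq : ∀ i, a * x0 i + b * y0 i = g i := by
    intro i
    rw [hx0def i, hy0def i]
    linear_combination a * Int.emod_add_mul_ediv (u * g i) b + (g i) * huv
  have hx0inj : Function.Injective x0 := by
    intro i j hij
    have hd : g i - g j = b * (y0 i - y0 j) := by
      have h1 := heq i; have h2 := heq j
      rw [hij] at h1
      linarith
    rcases le_or_gt (y0 j) (y0 i) with h | h
    · exact key i j 0 (y0 i - y0 j) le_rfl (by linarith) (by linarith)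
    · exact (key j i 0 (y0 j - y0 i) le_rfl (by linarith) (by linarith)).symm
  set σ := Tuple.sort x0 with hσ
  have hmono : StrictMono (x0 ∘ σ) :=
    (Tuple.monotone_sort x0).strictMono_of_injective (hx0inj.comp σ.injective)
  refine ⟨σ, x0 ∘ σ, y0 ∘ σ, fun i => heq (σ i), hmono, ?_, ?_, ?_⟩
  · intro i j hij
    by_contra hcon
    push_neg at hcon
    simp only [Function.comp] at hcon
    have hx : x0 (σ i) < x0 (σ j) := hmono hij
    have : σ j = σ i := by
      refine key (σ j) (σ i) (x0 (σ j) - x0 (σ i)) (y0 (σ j) - y0 (σ i)) (by linarith)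
        (by linarith) ?_
      linear_combination (heq (σ i)) - (heq (σ j))
    exact absurd (σ.injective this) (ne_of_gt hij)
  · intro i
    have := hx0lt (σ i)
    have := hx0nn (σ ⟨0, hn⟩)
    simp only [Function.comp]
    linarith
  · intro i
    by_contra hcon
    push_neg at hcon
    simp only [Function.comp] at hcon
    have hle : (⟨0, hn⟩ : Fin n) ≤ i := by simp [Fin.le_def]
    have hx0i : x0 (σ ⟨0, hn⟩) ≤ x0 (σ i) := hmono.monotone hle
    have h0 : σ ⟨0, hn⟩ = σ i := by
      refine key (σ ⟨0, hn⟩) (σ i) (x0 (σ ⟨0, hn⟩) - x0 (σ i) + b)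
        (y0 (σ ⟨0, hn⟩) - y0 (σ i) - a) ?_ (by linarith) ?_
      · have := hx0lt (σ i); have := hx0nn (σ ⟨0, hn⟩); linarith
      · linear_combination (heq (σ i)) - (heq (σ ⟨0, hn⟩))
    have : i = ⟨0, hn⟩ := σ.injective h0.symm
    rw [this] at hcon
    linarith
end

section
/- Let R be a one-dimensional analytically irreducible residually rational local domain whose integral closure is a DVR with valuation v, and let F be the Frobenius number of the numerical semigroup v(R). Suppose R is Gorenstein, i.e., v(R) is symmetric. Then for any nonzero fractional ideal I of R, v(I^{-1}) = {z ∈ ℤ | F − z ∉ v(I)}, and moreover v(I^{-1}) equals v(I)* := {z ∈ ℤ | z + v(I) ⊆ v(R)}. -/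
set_option synthInstance.maxHeartbeats 400000 in
/-- Let `R` be a one-dimensional analytically irreducible residually rational local
domain whose integral closure is a DVR with (normalized) valuation `v`, and let `F` be
the Frobenius number of the numerical semigroup `v(R)`. If `R` is Gorenstein, i.e. `v(R)`
is symmetric, then for any nonzero fractional ideal `I` of `R` one has
`v(I⁻¹) = {z | F − z ∉ v(I)}` and `v(I⁻¹) = v(I)* = {z | z + v(I) ⊆ v(R)}`. -/
theorem stmt14 {R K : Type*} [CommRing R] [IsDomain R] [IsNoetherianRing R] [IsLocalRing R]
    [Field K] [Algebra R K] [IsFractionRing R K]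
    (hdim : ringKrullDim R = 1)
    [IsDiscreteValuationRing (integralClosure R K)]
    [Module.Finite R (integralClosure R K)]
    (hres : Function.Surjective
      (fun r : R => IsLocalRing.residue (integralClosure R K) (algebraMap R _ r)))
    (v : K → ℤ)
    (hv_mul : ∀ x y : K, x ≠ 0 → y ≠ 0 → v (x * y) = v x + v y)
    (hv_mem : ∀ x : K, x ≠ 0 → (x ∈ (integralClosure R K : Subalgebra R K) ↔ 0 ≤ v x))
    (hv_unif : ∃ t : K, t ≠ 0 ∧ v t = 1)
    (vR : Set ℤ)
    (hvR : vR = {z | ∃ x : K, x ≠ 0 ∧ (∃ r : R, algebraMap R K r = x) ∧ v x = z})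
    (F : ℤ) (hF : F ∉ vR) (hFmax : ∀ z : ℤ, F < z → z ∈ vR)
    (hsym : ∀ z : ℤ, z ∈ vR ↔ F - z ∉ vR)
    (I : Submodule R K) (hIfg : I.FG) (hI0 : I ≠ ⊥)
    (vI vInv : Set ℤ)
    (hvI : vI = {z | ∃ x ∈ I, x ≠ 0 ∧ v x = z})
    (hvInv : vInv = {z | ∃ x ∈ fracDual R I, x ≠ 0 ∧ v x = z}) :
    vInv = {z : ℤ | F - z ∉ vI} ∧ vInv = {z : ℤ | ∀ w ∈ vI, z + w ∈ vR} := by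
  classical
  obtain ⟨t, ht, hvt1⟩ := hv_unif
  -- Basic facts about the valuation
  have hv1 : v 1 = 0 := by
    have h := hv_mul 1 1 one_ne_zero one_ne_zero
    rw [mul_one] at h; omega
  have hvneg : ∀ x : K, x ≠ 0 → v (-x) = v x := by
    intro x hx
    have h1 : v (-1 : K) = 0 := by
      have h := hv_mul (-1) (-1) (by norm_num) (by norm_num)
      rw [neg_mul_neg, one_mul, hv1] at h; omega
    have h := hv_mul (-1) x (by norm_num) hx
    rw [neg_one_mul] at h; omega
  have hvinv : ∀ x : K, x ≠ 0 → v x⁻¹ = - v x := by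
    intro x hx
    have h := hv_mul x x⁻¹ hx (inv_ne_zero hx)
    rw [mul_inv_cancel₀ hx, hv1] at h; omega
  have htpow : ∀ n : ℤ, (t ^ n : K) ≠ 0 := fun n => zpow_ne_zero n ht
  have hvtinv : v t⁻¹ = -1 := by rw [hvinv t ht, hvt1]
  have hvtz : ∀ n : ℤ, v (t ^ n) = n := by
    intro n
    induction n using Int.induction_on with
    | zero => rw [zpow_zero, hv1]
    | succ k ih =>
      rw [zpow_add_one₀ ht, hv_mul _ _ (htpow _) ht, ih, hvt1]
    | pred k ih =>
      rw [zpow_sub_one₀ ht, hv_mul _ _ (htpow _) (inv_ne_zero ht), ih, hvtinv]; omega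
  have hVmem : ∀ x : K, x ≠ 0 → 0 ≤ v x → x ∈ integralClosure R K :=
    fun x hx h => (hv_mem x hx).mpr h
  have hVge0 : ∀ r : R, algebraMap R K r ≠ 0 → 0 ≤ v (algebraMap R K r) := by
    intro r h
    exact (hv_mem _ h).mp ((integralClosure R K).algebraMap_mem r)
  -- Additivity bound for v
  have hvadd : ∀ x y : K, x ≠ 0 → y ≠ 0 → x + y ≠ 0 → min (v x) (v y) ≤ v (x + y) := by
    intro x y hx hy hxy
    set m := min (v x) (v y) with hm
    have h1 : x * t ^ (-m) ∈ integralClosure R K :=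
      hVmem _ (mul_ne_zero hx (htpow _)) (by rw [hv_mul _ _ hx (htpow _), hvtz]; omega)
    have h2 : y * t ^ (-m) ∈ integralClosure R K :=
      hVmem _ (mul_ne_zero hy (htpow _)) (by rw [hv_mul _ _ hy (htpow _), hvtz]; omega)
    have h3 : (x + y) * t ^ (-m) ∈ integralClosure R K := by
      have : (x + y) * t ^ (-m) = x * t ^ (-m) + y * t ^ (-m) := by ring
      rw [this]; exact add_mem h1 h2
    have h4 := (hv_mem _ (mul_ne_zero hxy (htpow _))).mp h3
    rw [hv_mul _ _ hxy (htpow _), hvtz] at h4; omega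
  have hvaddlt : ∀ p q : K, p ≠ 0 → q ≠ 0 → v p < v q → p + q ≠ 0 ∧ v (p + q) = v p := by
    intro p q hp hq hlt
    have hne : p + q ≠ 0 := by
      intro h
      have hq' : q = -p := eq_neg_of_add_eq_zero_right h
      rw [hq', hvneg p hp] at hlt; omega
    refine ⟨hne, ?_⟩
    have h1 := hvadd p q hp hq hne
    have h2 : min (v (p + q)) (v q) ≤ v p := by
      have h3 := hvadd (p + q) (-q) hne (neg_ne_zero.mpr hq)
        (by rw [add_neg_cancel_right]; exact hp)
      rw [hvneg q hq, add_neg_cancel_right] at h3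
      exact h3
    rcases le_total (v p) (v q) with h | h <;> rcases le_total (v (p+q)) (v q) with h' | h' <;>
      simp only [min_eq_left, min_eq_right, h, h'] at h1 h2 <;> omega
  -- approximation by residues
  have happrox : ∀ X Y : K, X ≠ 0 → Y ≠ 0 → v X = v Y →
      ∃ a : R, X - algebraMap R K a * Y = 0 ∨
        (X - algebraMap R K a * Y ≠ 0 ∧ v Y < v (X - algebraMap R K a * Y)) := by
    intro X Y hX hY hXY
    have hY' : Y⁻¹ ≠ 0 := inv_ne_zero hY
    have hu0 : X * Y⁻¹ ≠ 0 := mul_ne_zero hX hY'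
    have hvu : v (X * Y⁻¹) = 0 := by rw [hv_mul _ _ hX hY', hvinv Y hY]; omega
    have humem : X * Y⁻¹ ∈ integralClosure R K := hVmem _ hu0 (by omega)
    set u : integralClosure R K := ⟨X * Y⁻¹, humem⟩ with hu
    obtain ⟨a, ha⟩ := hres (IsLocalRing.residue _ u)
    have ha' : IsLocalRing.residue (integralClosure R K)
        (algebraMap R (integralClosure R K) a) = IsLocalRing.residue _ u := ha
    have hwmem : u - algebraMap R (integralClosure R K) a ∈
        IsLocalRing.maximalIdeal (integralClosure R K) := by
      have h0 : IsLocalRing.residue (integralClosure R K)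
          (u - algebraMap R (integralClosure R K) a) = 0 := by
        rw [map_sub, ha', sub_self]
      exact Ideal.Quotient.eq_zero_iff_mem.mp h0
    have hcoe : ((u - algebraMap R (integralClosure R K) a : integralClosure R K) : K)
        = X * Y⁻¹ - algebraMap R K a := rfl
    by_cases hw0 : X * Y⁻¹ - algebraMap R K a = 0
    · refine ⟨a, Or.inl (sub_eq_zero.mpr ?_)⟩
      have h1 : X * Y⁻¹ = algebraMap R K a := sub_eq_zero.mp hw0
      field_simp at h1
      rw [h1]
      try ring
    · have hwge : 0 ≤ v (X * Y⁻¹ - algebraMap R K a) := by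
        refine (hv_mem _ hw0).mp ?_
        rw [← hcoe]; exact (u - algebraMap R (integralClosure R K) a).2
      have hwne : v (X * Y⁻¹ - algebraMap R K a) ≠ 0 := by
        intro h0
        have hinv : (X * Y⁻¹ - algebraMap R K a)⁻¹ ∈ integralClosure R K :=
          hVmem _ (inv_ne_zero hw0) (by rw [hvinv _ hw0]; omega)
        have hunit : IsUnit (u - algebraMap R (integralClosure R K) a) := by
          refine IsUnit.of_mul_eq_one ⟨_, hinv⟩ ?_
          ext
          push_cast [hcoe]
          exact mul_inv_cancel₀ hw0
        exact (IsLocalRing.mem_maximalIdeal _).mp hwmem hunit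
      refine ⟨a, Or.inr ⟨?_, ?_⟩⟩
      · have : X - algebraMap R K a * Y = (X * Y⁻¹ - algebraMap R K a) * Y := by
          field_simp
        rw [this]; exact mul_ne_zero hw0 hY
      · have heq : X - algebraMap R K a * Y = (X * Y⁻¹ - algebraMap R K a) * Y := by
          field_simp
        rw [heq, hv_mul _ _ hw0 hY]; omega
  -- conductor: every element of value > F is in (the image of) R
  have hdV : ∃ d : R, algebraMap R K d ≠ 0 ∧
      ∀ w : K, w ∈ integralClosure R K → ∃ r : R, algebraMap R K r = algebraMap R K d * w := by
    have hfg : (⊤ : Submodule R (integralClosure R K)).FG := Module.finite_def.mp inferInstance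
    obtain ⟨s, hs⟩ := hfg
    obtain ⟨b, hb⟩ := IsLocalization.exist_integer_multiples_of_finset (nonZeroDivisors R)
      (s.image (fun x : integralClosure R K => (x : K)))
    refine ⟨(b : R), ?_, ?_⟩
    · have hb0 : (b : R) ≠ 0 := nonZeroDivisors.ne_zero b.2
      exact (map_ne_zero_iff _ (IsFractionRing.injective R K)).mpr hb0
    · intro w hw
      have hw' : (⟨w, hw⟩ : integralClosure R K) ∈ (⊤ : Submodule R (integralClosure R K)) :=
        trivial
      rw [← hs] at hw'
      have : ∃ r : R, algebraMap R K r = algebraMap R K (b : R) * ((⟨w, hw⟩ : integralClosure R K) : K) := by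
        refine Submodule.span_induction ?_ ?_ ?_ ?_ hw'
        · intro x hx
          have hmem : (x : K) ∈ s.image (fun x : integralClosure R K => (x : K)) :=
            Finset.mem_image_of_mem _ hx
          obtain ⟨r, hr⟩ := hb _ hmem
          exact ⟨r, by rw [hr, Algebra.smul_def]⟩
        · exact ⟨0, by simp⟩
        · rintro x y hx hy ⟨r1, hr1⟩ ⟨r2, hr2⟩
          refine ⟨r1 + r2, ?_⟩
          have hc : ((x + y : integralClosure R K) : K) = (x : K) + (y : K) := rfl
          rw [map_add, hr1, hr2, hc]; ring
        · rintro c x hx ⟨r, hr⟩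
          refine ⟨c * r, ?_⟩
          have hc : ((c • x : integralClosure R K) : K) = algebraMap R K c * (x : K) := by
            have : ((c • x : integralClosure R K) : K) = c • (x : K) := rfl
            rw [this, Algebra.smul_def]
          rw [map_mul, hr, hc]; ring
      simpa using this
  obtain ⟨d, hd0, hdmul⟩ := hdV
  have hcond : ∀ x : K, x ≠ 0 → F + 1 ≤ v x → ∃ r : R, algebraMap R K r = x := by
    have hstep : ∀ m : ℕ, ∀ x : K, x ≠ 0 → F + 1 ≤ v x →
        (v (algebraMap R K d) - v x).toNat ≤ m → ∃ r : R, algebraMap R K r = x := by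
      intro m
      induction m with
      | zero =>
        intro x hx hFx hle
        have hge : v (algebraMap R K d) ≤ v x := by omega
        have hw : x * (algebraMap R K d)⁻¹ ∈ integralClosure R K :=
          hVmem _ (mul_ne_zero hx (inv_ne_zero hd0))
            (by rw [hv_mul _ _ hx (inv_ne_zero hd0), hvinv _ hd0]; omega)
        obtain ⟨r, hr⟩ := hdmul _ hw
        refine ⟨r, ?_⟩
        rw [hr]; field_simp
      | succ m ih =>
        intro x hx hFx hle
        by_cases hsmall : (v (algebraMap R K d) - v x).toNat ≤ m
        · exact ih x hx hFx hsmall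
        · have hlt : v x < v (algebraMap R K d) := by omega
          have hxvR : v x ∈ vR := hFmax _ (by omega)
          rw [hvR] at hxvR
          obtain ⟨ρ, hρ0, ⟨r', hr'⟩, hρv⟩ := hxvR
          obtain ⟨a, hcase⟩ := happrox x ρ hx hρ0 (by omega)
          rcases hcase with h0 | ⟨hrne, hrv⟩
          · refine ⟨a * r', ?_⟩
            rw [map_mul, hr']
            exact (sub_eq_zero.mp h0).symm
          · rw [hρv] at hrv
            obtain ⟨r2, hr2⟩ := ih _ hrne (by omega) (by omega)
            refine ⟨r2 + a * r', ?_⟩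
            rw [map_add, map_mul, hr', hr2]; ring
    exact fun x hx hFx => hstep (v (algebraMap R K d) - v x).toNat x hx hFx le_rfl
  -- lower bound for values on I
  have hlow : ∃ e₀ : ℤ, ∀ y ∈ I, y ≠ 0 → e₀ ≤ v y := by
    obtain ⟨sI, hsI⟩ := hIfg
    by_cases hsne : (sI.erase 0).Nonempty
    · refine ⟨(sI.erase 0).inf' hsne v, ?_⟩
      intro y hyI hy0
      rw [← hsI] at hyI
      have hclaim : y = 0 ∨ (sI.erase 0).inf' hsne v ≤ v y := by
        refine Submodule.span_induction ?_ ?_ ?_ ?_ hyI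
        · intro x hx
          by_cases hx0 : x = 0
          · exact Or.inl hx0
          · exact Or.inr (Finset.inf'_le v (Finset.mem_erase.mpr ⟨hx0, hx⟩))
        · exact Or.inl rfl
        · intro x y' _ _ px py
          by_cases hx0 : x = 0
          · rw [hx0, zero_add]; exact py
          by_cases hy0 : y' = 0
          · rw [hy0, add_zero]; exact px
          by_cases hxy : x + y' = 0
          · exact Or.inl hxy
          · have hvx := px.resolve_left hx0
            have hvy := py.resolve_left hy0
            refine Or.inr ?_
            have h := hvadd x y' hx0 hy0 hxy
            rcases le_total (v x) (v y') with h' | h'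
            · rw [min_eq_left h'] at h; omega
            · rw [min_eq_right h'] at h; omega
        · intro c x _ px
          by_cases hx0 : x = 0
          · exact Or.inl (by rw [hx0, smul_zero])
          by_cases hc0 : algebraMap R K c = 0
          · exact Or.inl (by rw [Algebra.smul_def, hc0, zero_mul])
          · have hvx := px.resolve_left hx0
            refine Or.inr ?_
            rw [Algebra.smul_def, hv_mul _ _ hc0 hx0]
            have := hVge0 c hc0; omega
      exact hclaim.resolve_left hy0
    · exfalso
      apply hI0
      rw [← hsI, Submodule.span_eq_bot]
      intro x hx
      by_contra hx0
      exact hsne ⟨x, Finset.mem_erase.mpr ⟨hx0, hx⟩⟩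
  obtain ⟨e₀, he₀⟩ := hlow
  -- The hard inclusion: v(I)* ⊆ v(I⁻¹)
  have hhard : ∀ z : ℤ, (∀ y ∈ I, y ≠ 0 → z + v y ∈ vR) → z ∈ vInv := by
    intro z hz
    have main : ∀ m : ℕ, ∃ x : K, x ≠ 0 ∧ v x = z ∧
        ∀ y ∈ I, y ≠ 0 → F + 1 - z - m ≤ v y → ∃ r : R, algebraMap R K r = x * y := by
      intro m
      induction m with
      | zero =>
        refine ⟨t ^ z, htpow z, hvtz z, ?_⟩
        intro y hy hy0 hvy
        refine hcond _ (mul_ne_zero (htpow z) hy0) ?_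
        rw [hv_mul _ _ (htpow z) hy0, hvtz]
        push_cast at hvy
        omega
      | succ m ih =>
        obtain ⟨x, hx0, hxv, hgood⟩ := ih
        set b : ℤ := F - z - m with hb
        have hbm : F + 1 - z - ((m + 1 : ℕ) : ℤ) = b := by push_cast; omega
        by_cases hobs : ∃ y₁, y₁ ∈ I ∧ y₁ ≠ 0 ∧ v y₁ = b ∧
            ¬∃ r : R, algebraMap R K r = x * y₁
        · obtain ⟨y₁, hy₁I, hy₁0, hy₁v, hy₁n⟩ := hobs
          have hzb : z + b ∈ vR := by rw [← hy₁v]; exact hz y₁ hy₁I hy₁0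
          have hzbF : z + b < F := by
            have h1 : z + b ≠ F := fun h => hF (h ▸ hzb)
            omega
          have hXY0 : x * y₁ ≠ 0 := mul_ne_zero hx0 hy₁0
          have hvXY : v (x * y₁) = z + b := by rw [hv_mul _ _ hx0 hy₁0, hxv, hy₁v]
          have hne : ∀ r : R, x * y₁ - algebraMap R K r ≠ 0 := by
            intro r h
            exact hy₁n ⟨r, (sub_eq_zero.mp h).symm⟩
          have hbdd : ∀ n : ℤ, (∃ ρ : R, v (x * y₁ - algebraMap R K ρ) = n) → n ≤ F := by
            rintro n ⟨ρ, hρ⟩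
            by_contra hgt
            obtain ⟨r', hr'⟩ := hcond _ (hne ρ) (by omega)
            exact hy₁n ⟨r' + ρ, by rw [map_add, hr']; ring⟩
          obtain ⟨γ, ⟨ρ, hρ⟩, hγmax⟩ := Int.exists_greatest_of_bdd ⟨F, hbdd⟩
            ⟨z + b, ⟨0, by rw [map_zero, sub_zero, hvXY]⟩⟩
          have hγF : γ ≤ F := hbdd γ ⟨ρ, hρ⟩
          have hγnR : γ ∉ vR := by
            intro hγR
            rw [hvR] at hγR
            obtain ⟨ρ', hρ'0, ⟨r', hr'⟩, hρ'v⟩ := hγR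
            obtain ⟨a, hcase⟩ := happrox (x * y₁ - algebraMap R K ρ) ρ' (hne ρ) hρ'0 (by omega)
            rcases hcase with h0 | ⟨hrne, hrv⟩
            · refine hy₁n ⟨ρ + a * r', ?_⟩
              rw [map_add, map_mul, hr']
              have h1 := sub_eq_zero.mp h0
              rw [← h1]; ring
            · have h2 : x * y₁ - algebraMap R K ρ - algebraMap R K a * ρ'
                  = x * y₁ - algebraMap R K (ρ + a * r') := by
                rw [map_add, map_mul, hr']; ring
              rw [h2] at hrv
              have h3 := hγmax _ ⟨ρ + a * r', rfl⟩
              omega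
          have hγgt : z + b < γ := by
            have h1 := hγmax (z + b) ⟨0, by rw [map_zero, sub_zero, hvXY]⟩
            rcases lt_or_eq_of_le h1 with h | h
            · exact h
            · exact absurd (h ▸ hzb) hγnR
          have hγeF : γ = F := by
            by_contra hnF
            have hγlt : γ < F := lt_of_le_of_ne hγF hnF
            have hFγR : F - γ ∈ vR := by
              refine (hsym (F - γ)).mpr ?_
              have h1 : F - (F - γ) = γ := by ring
              rw [h1]; exact hγnR
            rw [hvR] at hFγR
            obtain ⟨σ, hσ0, ⟨s₀, hs₀⟩, hσv⟩ := hFγR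
            have hy₂K : (s₀ • y₁ : K) = σ * y₁ := by rw [Algebra.smul_def, hs₀]
            have hy₂0 : σ * y₁ ≠ 0 := mul_ne_zero hσ0 hy₁0
            have hvy₂ : v (σ * y₁) = F - γ + b := by rw [hv_mul _ _ hσ0 hy₁0, hσv, hy₁v]
            obtain ⟨r₂, hr₂⟩ := hgood (s₀ • y₁) (I.smul_mem s₀ hy₁I)
              (by rw [hy₂K]; exact hy₂0) (by rw [hy₂K, hvy₂]; push_cast; omega)
            rw [hy₂K] at hr₂
            have hkey : algebraMap R K (r₂ - s₀ * ρ) = σ * (x * y₁ - algebraMap R K ρ) := by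
              rw [map_sub, map_mul, hs₀, hr₂]; ring
            have hkey0 : σ * (x * y₁ - algebraMap R K ρ) ≠ 0 := mul_ne_zero hσ0 (hne ρ)
            have hkeyv : v (σ * (x * y₁ - algebraMap R K ρ)) = F := by
              rw [hv_mul _ _ hσ0 (hne ρ), hσv, hρ]; omega
            apply hF
            rw [hvR]
            exact ⟨_, hkey0, ⟨r₂ - s₀ * ρ, hkey⟩, hkeyv⟩
          -- the correction
          have hvAF : v (x * y₁ - algebraMap R K ρ) = F := by rw [hρ, hγeF]
          have hB0 : (t ^ (F - b) * y₁ : K) ≠ 0 := mul_ne_zero (htpow _) hy₁0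
          have hvB : v (t ^ (F - b) * y₁) = F := by
            rw [hv_mul _ _ (htpow _) hy₁0, hvtz, hy₁v]; ring
          obtain ⟨a, hcase⟩ := happrox (x * y₁ - algebraMap R K ρ) (t ^ (F - b) * y₁)
            (hne ρ) hB0 (by omega)
          set x' : K := x - algebraMap R K a * t ^ (F - b) with hx'def
          have hx'y₁ : ∃ r : R, algebraMap R K r = x' * y₁ := by
            have hexp : x' * y₁ = algebraMap R K ρ +
                (x * y₁ - algebraMap R K ρ - algebraMap R K a * (t ^ (F - b) * y₁)) := by
              rw [hx'def]; ring
            rcases hcase with h0 | ⟨hrne, hrv⟩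
            · exact ⟨ρ, by rw [hexp, h0, add_zero]⟩
            · rw [hvB] at hrv
              obtain ⟨rr, hrr⟩ := hcond _ hrne (by omega)
              exact ⟨ρ + rr, by rw [map_add, hrr, hexp]⟩
          have hx'val : x' ≠ 0 ∧ v x' = z := by
            by_cases ha0 : algebraMap R K a = 0
            · rw [hx'def, ha0, zero_mul, sub_zero]
              exact ⟨hx0, hxv⟩
            · have hc0 : algebraMap R K a * t ^ (F - b) ≠ 0 := mul_ne_zero ha0 (htpow _)
              have hvc : z < v (algebraMap R K a * t ^ (F - b)) := by
                rw [hv_mul _ _ ha0 (htpow _), hvtz]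
                have h1 := hVge0 a ha0
                omega
              have h := hvaddlt x (-(algebraMap R K a * t ^ (F - b))) hx0
                (neg_ne_zero.mpr hc0) (by rw [hvneg _ hc0, hxv]; omega)
              have hrw : x + -(algebraMap R K a * t ^ (F - b)) = x' := by rw [hx'def]; ring
              rw [hrw] at h
              exact ⟨h.1, by rw [h.2, hxv]⟩
          have hhigh : ∀ u, u ∈ I → u ≠ 0 → b + 1 ≤ v u →
              ∃ r : R, algebraMap R K r = x' * u := by
            intro u huI hu0 hvu
            obtain ⟨r1, hr1⟩ := hgood u huI hu0 (by push_cast; omega)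
            by_cases ha0 : algebraMap R K a = 0
            · refine ⟨r1, ?_⟩
              rw [hx'def, ha0, zero_mul, sub_zero, hr1]
            · have hc0 : algebraMap R K a * t ^ (F - b) * u ≠ 0 :=
                mul_ne_zero (mul_ne_zero ha0 (htpow _)) hu0
              obtain ⟨r2, hr2⟩ := hcond _ hc0 (by
                rw [hv_mul _ _ (mul_ne_zero ha0 (htpow _)) hu0, hv_mul _ _ ha0 (htpow _), hvtz]
                have h1 := hVge0 a ha0
                omega)
              refine ⟨r1 - r2, ?_⟩
              rw [map_sub, hr1, hr2, hx'def]; ring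
          refine ⟨x', hx'val.1, hx'val.2, ?_⟩
          intro y hyI hy0 hvy
          rw [hbm] at hvy
          rcases lt_or_ge b (v y) with hgt | hle
          · exact hhigh y hyI hy0 hgt
          · have hvyb : v y = b := le_antisymm hle hvy
            obtain ⟨a', hcase'⟩ := happrox y y₁ hy0 hy₁0 (by rw [hvyb, hy₁v])
            obtain ⟨r1, hr1⟩ := hx'y₁
            rcases hcase' with h0 | ⟨hu0, huv⟩
            · have hyy : y = algebraMap R K a' * y₁ := sub_eq_zero.mp h0
              exact ⟨a' * r1, by rw [map_mul, hr1, hyy]; ring⟩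
            · rw [hy₁v] at huv
              have huI : y - algebraMap R K a' * y₁ ∈ I := by
                refine sub_mem hyI ?_
                have h1 := I.smul_mem a' hy₁I
                rwa [Algebra.smul_def] at h1
              obtain ⟨r2, hr2⟩ := hhigh _ huI hu0 (by omega)
              refine ⟨a' * r1 + r2, ?_⟩
              rw [map_add, map_mul, hr1, hr2]; ring
        · -- no obstruction at level b
          refine ⟨x, hx0, hxv, ?_⟩
          intro y hyI hy0 hvy
          rw [hbm] at hvy
          rcases lt_or_ge b (v y) with hgt | hle
          · exact hgood y hyI hy0 (by push_cast; omega)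
          · have hvyb : v y = b := le_antisymm hle hvy
            by_contra hno
            exact hobs ⟨y, hyI, hy0, hvyb, hno⟩
    obtain ⟨x, hx0, hxv, hgood⟩ := main (F + 1 - z - e₀).toNat
    have hxmem : ∀ y ∈ I, ∃ r : R, algebraMap R K r = x * y := by
      intro y hy
      by_cases hy0 : y = 0
      · exact ⟨0, by rw [hy0, mul_zero, map_zero]⟩
      · exact hgood y hy hy0 (by have := he₀ y hy hy0; omega)
    rw [hvInv]
    exact ⟨x, hxmem, hx0, hxv⟩
  -- easy inclusions
  have hInvSub : ∀ z ∈ vInv, ∀ y ∈ I, y ≠ 0 → z + v y ∈ vR := by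
    intro z hzv y hyI hy0
    rw [hvInv] at hzv
    obtain ⟨x, hxD, hx0, hxv⟩ := hzv
    have hxD' : ∀ y ∈ I, ∃ r : R, algebraMap R K r = x * y := hxD
    obtain ⟨r, hr⟩ := hxD' y hyI
    rw [hvR]
    exact ⟨x * y, mul_ne_zero hx0 hy0, ⟨r, hr⟩, by rw [hv_mul _ _ hx0 hy0, hxv]⟩
  have hAC : ∀ z : ℤ, (∀ y ∈ I, y ≠ 0 → z + v y ∈ vR) → F - z ∉ vI := by
    intro z hz hFz
    rw [hvI] at hFz
    obtain ⟨y, hyI, hy0, hyv⟩ := hFz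
    have h := hz y hyI hy0
    rw [hyv] at h
    have h1 : z + (F - z) = F := by ring
    rw [h1] at h
    exact hF h
  have hCA : ∀ z : ℤ, F - z ∉ vI → ∀ y ∈ I, y ≠ 0 → z + v y ∈ vR := by
    intro z hc y hyI hy0
    by_contra hn
    have h1 : F - (z + v y) ∈ vR := by
      refine (hsym (F - (z + v y))).mpr ?_
      have h2 : F - (F - (z + v y)) = z + v y := by ring
      rw [h2]
      exact hn
    rw [hvR] at h1
    obtain ⟨ρ, hρ0, ⟨r, hr⟩, hρv⟩ := h1
    apply hc
    rw [hvI]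
    refine ⟨ρ * y, ?_, mul_ne_zero hρ0 hy0, ?_⟩
    · have h3 := I.smul_mem r hyI
      rwa [Algebra.smul_def, hr] at h3
    · rw [hv_mul _ _ hρ0 hy0, hρv]; ring
  constructor
  · ext z
    simp only [Set.mem_setOf_eq]
    constructor
    · intro h
      exact hAC z (hInvSub z h)
    · intro h
      exact hhard z (hCA z h)
  · ext z
    simp only [Set.mem_setOf_eq]
    constructor
    · intro h w hw
      rw [hvI] at hw
      obtain ⟨y, hyI, hy0, hyv⟩ := hw
      rw [← hyv]
      exact hInvSub z h y hyI hy0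
    · intro h
      refine hhard z ?_
      intro y hyI hy0
      exact h (v y) (by rw [hvI]; exact ⟨y, hyI, hy0, rfl⟩)
end

section
/- Let S be a numerical semigroup with Frobenius number F such that S is symmetric (S = {z ∈ ℤ | F − z ∉ S}). Let A be a relative ideal of S. Then A* = {z ∈ ℤ | z + A ⊆ S} equals {z ∈ ℤ | F − z ∉ A}. -/
/-- Let `S` be a symmetric numerical semigroup with Frobenius number `F`
(`z ∈ S ↔ F − z ∉ S`), and let `A` be a relative ideal of `S`. Then
`A* = {z | z + A ⊆ S}` equals `{z | F − z ∉ A}`. -/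
theorem stmt15 (S : Set ℤ) (F : ℤ)
    (hS0 : (0 : ℤ) ∈ S) (hSadd : ∀ x ∈ S, ∀ y ∈ S, x + y ∈ S)
    (hSnn : ∀ x ∈ S, (0 : ℤ) ≤ x)
    (hF : F ∉ S) (hFmax : ∀ z : ℤ, F < z → z ∈ S)
    (hsym : ∀ z : ℤ, z ∈ S ↔ F - z ∉ S)
    (A : Set ℤ) (hAne : A.Nonempty) (hAbdd : BddBelow A)
    (hAS : ∀ x ∈ A, ∀ s ∈ S, x + s ∈ A) :
    {z : ℤ | ∀ x ∈ A, z + x ∈ S} = {z : ℤ | F - z ∉ A} := by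
  ext z
  simp only [Set.mem_setOf_eq]
  constructor
  · intro h hFz
    exact hF (by simpa using h _ hFz)
  · intro h x hx
    by_contra hzx
    have hs : F - (z + x) ∈ S := by
      by_contra hs; exact hzx ((hsym (z + x)).mpr hs)
    have := hAS x hx _ hs
    apply h
    have : x + (F - (z + x)) = F - z := by ring
    exact this ▸ hAS x hx _ hs
end

section
/- Let a, b be coprime integers with 1 < a < b and S = ⟨a,b⟩. Let A be a relative ideal of S with minimal generators ψ(p_i) where p_i = overline{(x_i, y_i)} and x_1 < ⋯ < x_n < x_1 + b, y_1 > ⋯ > y_n > y_1 − a. Then the dual ideal A* = {z ∈ ℤ | z + A ⊆ S} is the relative ideal generated by −ax_1 − by_n together with ab − ax_{i+1} − by_i for i = 1, …, n−1. -/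
/-- Let `S = ⟨a,b⟩` with `a, b` coprime, `1 < a < b`, and let `A` be a relative ideal of
`S` with minimal generators `ψ(p_i)`, `p_i = (x_i, y_i)`, where
`x_1 < ⋯ < x_n < x_1 + b` and `y_1 > ⋯ > y_n > y_1 − a`. Then the dual ideal
`A* = {z | z + A ⊆ S}` is the relative ideal generated by `−a x_1 − b y_n` together with
`ab − a x_{i+1} − b y_i` for `i = 1, …, n−1`. -/
theorem stmt16 (a b : ℤ) (ha : 1 < a) (hab : a < b) (hcop : IsCoprime a b)
    (S : Set ℤ) (hS : S = {z | ∃ u v : ℕ, z = a * (u : ℤ) + b * (v : ℤ)})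
    (A : Set ℤ) {n : ℕ} (hn : 0 < n) (x y g : Fin n → ℤ)
    (hg : ∀ i, g i = a * x i + b * y i)
    (hA : A = {z | ∃ i, ∃ s ∈ S, z = g i + s})
    (hmin : ∀ i j, (∃ s ∈ S, g i = g j + s) → i = j)
    (hx : StrictMono x) (hy : StrictAnti y)
    (hxb : ∀ i, x i < x ⟨0, hn⟩ + b) (hya : ∀ i, y ⟨0, hn⟩ - a < y i)
    (d : Fin n → ℤ)
    (hd1 : ∀ i : Fin n, ∀ h : i.1 + 1 < n, d i = a * b - a * x ⟨i.1 + 1, h⟩ - b * y i)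
    (hd2 : ∀ i : Fin n, i.1 + 1 = n → d i = -(a * x ⟨0, hn⟩) - b * y i) :
    {z : ℤ | ∀ w ∈ A, z + w ∈ S} = {z : ℤ | ∃ i, ∃ s ∈ S, z = d i + s} := by
  have ha0 : (0:ℤ) < a := by linarith
  have hb0 : (0:ℤ) < b := by linarith
  -- membership criterion with integer coefficients
  have hmem : ∀ m : ℤ, m ∈ S ↔ ∃ u v : ℤ, 0 ≤ u ∧ 0 ≤ v ∧ m = a * u + b * v := by
    intro m
    rw [hS]
    simp only [Set.mem_setOf_eq]
    constructor
    · rintro ⟨u, v, rfl⟩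
      exact ⟨u, v, Int.natCast_nonneg u, Int.natCast_nonneg v, rfl⟩
    · rintro ⟨u, v, hu, hv, rfl⟩
      exact ⟨u.toNat, v.toNat, by rw [Int.toNat_of_nonneg hu, Int.toNat_of_nonneg hv]⟩
  -- normalized representation of elements of S
  have hnorm : ∀ m ∈ S, ∃ v : ℤ, 0 ≤ v ∧ v < a ∧ a ∣ (m - b * v) ∧ b * v ≤ m := by
    intro m hm
    rcases (hmem m).1 hm with ⟨u, v, hu, hv, rfl⟩
    have hve : a * (v / a) + v % a = v := Int.mul_ediv_add_emod v a
    have hdnn : 0 ≤ v / a := Int.ediv_nonneg hv ha0.le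
    refine ⟨v % a, Int.emod_nonneg v (by linarith), Int.emod_lt_of_pos v ha0,
      ⟨u + b * (v / a), by linear_combination (-b : ℤ) * hve⟩, ?_⟩
    have h1 : 0 ≤ a * (u + b * (v / a)) :=
      mul_nonneg ha0.le (add_nonneg hu (mul_nonneg hb0.le hdnn))
    nlinarith [hve]
  have h0S : (0 : ℤ) ∈ S := (hmem 0).2 ⟨0, 0, le_refl _, le_refl _, by ring⟩
  -- d i + g j is always in S (with explicit nonneg coefficients)
  have key : ∀ i j : Fin n, ∃ p q : ℤ, 0 ≤ p ∧ 0 ≤ q ∧ d i + g j = a * p + b * q := by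
    intro i j
    rcases lt_or_eq_of_le (Nat.succ_le_of_lt i.2) with h | h
    · -- i.1 + 1 < n
      set i' : Fin n := ⟨i.1 + 1, h⟩ with hi'
      have hdi := hd1 i h
      rcases le_or_gt j i with hji | hij
      · -- j ≤ i
        refine ⟨x j + b - x i', y j - y i, ?_, ?_, ?_⟩
        · have h1 : x i' < x ⟨0, hn⟩ + b := hxb i'
          have h2 : x ⟨0, hn⟩ ≤ x j := hx.monotone (by simp [Fin.le_def])
          linarith
        · have := hy.antitone hji
          linarith
        · rw [hdi, hg j]; ring
      · -- i < j, so i' ≤ j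
        have hi'j : i' ≤ j := by
          rw [Fin.le_def]
          exact Nat.succ_le_of_lt (Fin.lt_def.mp hij)
        refine ⟨x j - x i', y j - y i + a, ?_, ?_, ?_⟩
        · have := hx.monotone hi'j; linarith
        · have h1 : y ⟨0, hn⟩ - a < y j := hya j
          have h2 : y i ≤ y ⟨0, hn⟩ := hy.antitone (by simp [Fin.le_def])
          linarith
        · rw [hdi, hg j]; ring
    · -- i is the last index
      have hdi := hd2 i h
      have hji : j ≤ i := by
        rw [Fin.le_def]
        omega
      refine ⟨x j - x ⟨0, hn⟩, y j - y i, ?_, ?_, ?_⟩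
      · have := hx.monotone (show (⟨0, hn⟩ : Fin n) ≤ j by simp [Fin.le_def])
        linarith
      · have := hy.antitone hji; linarith
      · rw [hdi, hg j]; ring
  ext z
  simp only [Set.mem_setOf_eq]
  constructor
  · -- forward direction
    intro hz
    have hgA : ∀ i, g i ∈ A := by
      intro i
      rw [hA]
      exact ⟨i, 0, h0S, by ring⟩
    have hzg : ∀ i, z + g i ∈ S := fun i => hz _ (hgA i)
    choose v' hv0 hva hdvd hvle using fun i => hnorm _ (hzg i)
    set U : Fin n → ℤ := fun i => (z + g i - b * v' i) / a with hUdef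
    have hUe : ∀ i, a * U i = z + g i - b * v' i := by
      intro i
      exact Int.mul_ediv_cancel' (hdvd i)
    have hU0 : ∀ i, 0 ≤ U i := by
      intro i
      have h1 : 0 ≤ a * U i := by rw [hUe i]; linarith [hvle i]
      exact nonneg_of_mul_nonneg_right h1 ha0
    by_contra hcon
    push_neg at hcon
    -- step lemma
    have step : ∀ (i : Fin n) (h : i.1 + 1 < n),
        U ⟨i.1 + 1, h⟩ = U i + x ⟨i.1 + 1, h⟩ - x i := by
      intro i h
      set j : Fin n := ⟨i.1 + 1, h⟩ with hj
      have hij : i < j := by rw [Fin.lt_def]; exact Nat.lt_succ_self _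
      have e1 := hUe i
      have e2 := hUe j
      have emain : a * (U i - U j - x i + x j) = b * ((v' j - y j) - (v' i - y i)) := by
        linear_combination e1 - e2 + hg i - hg j
      have hdvdD : a ∣ ((v' j - y j) - (v' i - y i)) :=
        hcop.dvd_of_dvd_mul_left ⟨U i - U j - x i + x j, by linarith [emain]⟩
      obtain ⟨k, hk⟩ := hdvdD
      have hyij : y j < y i := hy hij
      have hyd : y i - y j < a := by
        have h1 : y ⟨0, hn⟩ - a < y j := hya j
        have h2 : y i ≤ y ⟨0, hn⟩ := hy.antitone (by simp [Fin.le_def])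
        linarith
      have hlb : -a < a * k := by
        have := hva i; have := hv0 j; linarith [hk]
      have hub : a * k < 2 * a := by
        have := hva j; have := hv0 i; linarith [hk]
      have hk0 : (-1 : ℤ) < k := by
        by_contra hc
        push_neg at hc
        nlinarith
      have hk2 : k < 2 := by
        by_contra hc
        push_neg at hc
        nlinarith
      have hk01 : k = 0 ∨ k = 1 := by omega
      rcases hk01 with rfl | rfl
      · have : a * (U i - U j - x i + x j) = 0 := by rw [emain, hk]; ring
        have h2 : U i - U j - x i + x j = 0 := by
          rcases mul_eq_zero.mp this with h | h
          · exact absurd h (by linarith)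
          · exact h
        linarith
      · -- k = 1 case: contradiction with hcon i
        exfalso
        have hUj : U j = U i + x j - x i - b := by
          have h2 : a * (U i - U j - x i + x j) = a * b := by
            rw [emain, hk]; ring
          have := mul_left_cancel₀ (show (a:ℤ) ≠ 0 by linarith) h2
          linarith
        have hzs : z = d i + (a * U j + b * v' i) := by
          rw [hd1 i h, hUj]
          linear_combination -e1 - hg i
        exact hcon i (a * U j + b * v' i)
          ((hmem _).2 ⟨U j, v' i, hU0 j, hv0 i, rfl⟩) hzs
    -- induction: U i = U 0 + x i - x 0
    have hUall : ∀ (m : ℕ) (hm : m < n),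
        U ⟨m, hm⟩ = U ⟨0, hn⟩ + x ⟨m, hm⟩ - x ⟨0, hn⟩ := by
      intro m
      induction m with
      | zero => intro hm; ring
      | succ k ih =>
        intro hm
        have hk : k < n := by omega
        have := step ⟨k, hk⟩ hm
        rw [this, ih hk]
        ring
    -- final contradiction using the last index
    set l : Fin n := ⟨n - 1, by omega⟩ with hl
    have hln : l.1 + 1 = n := by simp [hl]; omega
    have hUl : U l = U ⟨0, hn⟩ + x l - x ⟨0, hn⟩ := hUall (n - 1) (by omega)
    have hzs : z = d l + (a * (U l - x l + x ⟨0, hn⟩) + b * v' l) := by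
      rw [hd2 l hln]
      linear_combination -hUe l - hg l
    exact absurd hzs (hcon l _
      ((hmem _).2 ⟨U l - x l + x ⟨0, hn⟩, v' l, by linarith [hU0 ⟨0, hn⟩], hv0 l, rfl⟩))
  · -- reverse direction
    rintro ⟨i, s, hs, rfl⟩ w hw
    rw [hA] at hw
    obtain ⟨j, s', hs', rfl⟩ := hw
    obtain ⟨p, q, hp, hq, hpq⟩ := key i j
    obtain ⟨u1, v1, hu1, hv1, rfl⟩ := (hmem s).1 hs
    obtain ⟨u2, v2, hu2, hv2, rfl⟩ := (hmem s').1 hs'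
    refine (hmem _).2 ⟨p + u1 + u2, q + v1 + v2, by linarith, by linarith, ?_⟩
    linear_combination hpq
end
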